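/- arXiv:1606.06645 — 3 statements merged into one kernel-verified Lean document; each statement's English description precedes it below -/
import Mathlib

section
/- Let X, Y be independent under P₀ with h bounded, r(x,y) the interaction term of h, and suppose Var₀(r(X,Y)) > 0. For α > 0 large enough that L*(x,y) = 1 + r(x,y)/(2α) is nonnegative, L* maximizes E₀[h(X,Y)L] − α E₀(L−1)² over all L ≥ 0 with E₀[L|X] = E₀[L|Y] = 1 a.s. -/
open MeasureTheory

section helpers
variable {δ : Type*} [MeasurableSpace δ]

lemma my_integrable_of_bdd (m : Measure δ) [IsFiniteMeasure m] {f : δ → ℝ}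
    (hf : Measurable f) {C : ℝ} (hC : ∀ x, |f x| ≤ C) : Integrable f m :=
  (integrable_const C).mono' hf.aestronglyMeasurable
    (Filter.Eventually.of_forall fun x => by simpa using hC x)

lemma my_abs_integral_le (m : Measure δ) [IsProbabilityMeasure m] {f : δ → ℝ}
    {C : ℝ} (hC : ∀ x, |f x| ≤ C) : |∫ x, f x ∂m| ≤ C := by
  have := norm_integral_le_of_norm_le_const (μ := m) (f := f) (C := C)
    (Filter.Eventually.of_forall fun x => by simpa using hC x)
  simpa [measure_univ] using this

lemma my_memLp_of_bdd (m : Measure δ) [IsFiniteMeasure m] {f : δ → ℝ}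
    (hf : Measurable f) {C : ℝ} (hC : ∀ x, |f x| ≤ C) : MemLp f 2 m :=
  MemLp.of_bound hf.aestronglyMeasurable C
    (Filter.Eventually.of_forall fun x => by simpa using hC x)

end helpers

/-- With `X`, `Y` independent under `P₀ = μ.prod ν`, `h` bounded, `r` the
interaction term of `h`, and `Var₀(r(X,Y)) > 0`, for `a > 0` large enough that
`L*(x,y) = 1 + r(x,y)/(2a)` is nonnegative, `L*` maximizes
`E₀[h(X,Y) L] − a E₀(L−1)²` over all `L ≥ 0` with `E₀[L|X] = E₀[L|Y] = 1` a.s. -/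
theorem Lstar_maximizes_lagrangian
    {α β : Type*} [MeasurableSpace α] [MeasurableSpace β]
    (μ : Measure α) (ν : Measure β) [IsProbabilityMeasure μ] [IsProbabilityMeasure ν]
    (h : α → β → ℝ) (hmeas : Measurable (Function.uncurry h))
    (C : ℝ) (hbdd : ∀ x y, |h x y| ≤ C)
    (r : α → β → ℝ)
    (hr : ∀ x y, r x y =
      h x y - (∫ y', h x y' ∂ν) - (∫ x', h x' y ∂μ) + ∫ x', ∫ y', h x' y' ∂ν ∂μ)
    (hvar : 0 < (∫ p : α × β, (r p.1 p.2) ^ 2 ∂(μ.prod ν))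
      - (∫ p : α × β, r p.1 p.2 ∂(μ.prod ν)) ^ 2)
    (a : ℝ) (ha : 0 < a)
    (hLstar_nonneg : ∀ x y, 0 ≤ 1 + r x y / (2 * a)) :
    ∀ L : α × β → ℝ, Measurable L → (∀ᵐ p ∂(μ.prod ν), 0 ≤ L p) →
      MemLp L 2 (μ.prod ν) →
      (∀ᵐ x ∂μ, ∫ y, L (x, y) ∂ν = 1) →
      (∀ᵐ y ∂ν, ∫ x, L (x, y) ∂μ = 1) →
      (∫ p : α × β, h p.1 p.2 * L p ∂(μ.prod ν))
          - a * ∫ p : α × β, (L p - 1) ^ 2 ∂(μ.prod ν)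
        ≤ (∫ p : α × β, h p.1 p.2 * (1 + r p.1 p.2 / (2 * a)) ∂(μ.prod ν))
          - a * ∫ p : α × β, ((1 + r p.1 p.2 / (2 * a)) - 1) ^ 2 ∂(μ.prod ν) := by
  intro L hLm hLpos hL2 hLX hLY
  -- abbreviations
  set g₁ : α → ℝ := fun x => ∫ y', h x y' ∂ν with hg₁def
  set g₂ : β → ℝ := fun y => ∫ x', h x' y ∂μ with hg₂def
  set c : ℝ := ∫ x', ∫ y', h x' y' ∂ν ∂μ with hcdef
  have hr' : ∀ x y, r x y = h x y - g₁ x - g₂ y + c := by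
    simp only [hg₁def, hg₂def, hcdef]; exact hr
  -- measurability
  have mh : Measurable (fun p : α × β => h p.1 p.2) := hmeas
  have mg₁ : Measurable g₁ := hmeas.stronglyMeasurable.integral_prod_right'.measurable
  have mg₂ : Measurable g₂ :=
    (hmeas.comp measurable_swap).stronglyMeasurable.integral_prod_right'.measurable
  -- bounds
  have hg₁b : ∀ x, |g₁ x| ≤ C := fun x => my_abs_integral_le ν (fun y => hbdd x y)
  have hg₂b : ∀ y, |g₂ y| ≤ C := fun y => my_abs_integral_le μ (fun x => hbdd x y)
  have hcb : |c| ≤ C := my_abs_integral_le μ hg₁b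
  have hrb : ∀ x y, |r x y| ≤ 4 * C := by
    intro x y
    have h1 := hbdd x y; have h2 := hg₁b x; have h3 := hg₂b y
    rw [abs_le] at h1 h2 h3 ⊢
    rw [abs_le] at hcb
    rw [hr' x y]
    constructor <;> linarith [hcb.1, hcb.2]
  have mr : Measurable (fun p : α × β => r p.1 p.2) := by
    have : (fun p : α × β => r p.1 p.2)
        = fun p : α × β => h p.1 p.2 - g₁ p.1 - g₂ p.2 + c := funext fun p => hr' p.1 p.2
    rw [this]
    exact ((mh.sub (mg₁.comp measurable_fst)).sub (mg₂.comp measurable_snd)).add measurable_const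
  have hint_h : Integrable (Function.uncurry h) (μ.prod ν) :=
    my_integrable_of_bdd _ hmeas (fun p => hbdd p.1 p.2)
  -- Fubini: ∫ g₂ dν = c
  have hswap : ∫ y, g₂ y ∂ν = c := by
    rw [hg₂def, hcdef]
    exact (integral_integral_swap (f := fun x y => h x y) hint_h).symm
  -- marginals of r vanish
  have hrν : ∀ x, ∫ y, r x y ∂ν = 0 := by
    intro x
    have h1 : Integrable (fun y => h x y) ν :=
      my_integrable_of_bdd ν (hmeas.comp measurable_prodMk_left) (hbdd x)
    have h2 : Integrable g₂ ν := my_integrable_of_bdd ν mg₂ hg₂b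
    have e : ∀ y, r x y = h x y - g₁ x - g₂ y + c := hr' x
    calc ∫ y, r x y ∂ν = ∫ y, (h x y - g₁ x - g₂ y + c) ∂ν := by
          exact integral_congr_ae (Filter.Eventually.of_forall e)
      _ = 0 := by
          have hA : Integrable (fun y => h x y - g₁ x) ν := h1.sub (integrable_const _)
          have hB : Integrable (fun y => h x y - g₁ x - g₂ y) ν := hA.sub h2
          rw [integral_add hB (integrable_const c), integral_sub hA h2,
            integral_sub h1 (integrable_const _), hswap]
          simp [hg₁def]
  have hrμ : ∀ y, ∫ x, r x y ∂μ = 0 := by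
    intro y
    have h1 : Integrable (fun x => h x y) μ :=
      my_integrable_of_bdd μ (hmeas.comp measurable_prodMk_right) (fun x => hbdd x y)
    have h2 : Integrable g₁ μ := my_integrable_of_bdd μ mg₁ hg₁b
    have e : ∀ x, r x y = h x y - g₁ x - g₂ y + c := fun x => hr' x y
    calc ∫ x, r x y ∂μ = ∫ x, (h x y - g₁ x - g₂ y + c) ∂μ := by
          exact integral_congr_ae (Filter.Eventually.of_forall e)
      _ = 0 := by
          have hA : Integrable (fun x => h x y - g₁ x) μ := h1.sub h2
          have hB : Integrable (fun x => h x y - g₁ x - g₂ y) μ := hA.sub (integrable_const _)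
          rw [integral_add hB (integrable_const c), integral_sub hA (integrable_const _),
            integral_sub h1 h2]
          simp [hg₁def, hg₂def, hcdef]
  -- the deviation D
  set D : α × β → ℝ := fun p => L p - 1 - r p.1 p.2 / (2 * a) with hDdef
  have mrdiv : Measurable (fun p : α × β => r p.1 p.2 / (2 * a)) := mr.div_const _
  have hrdivb : ∀ p : α × β, |r p.1 p.2 / (2 * a)| ≤ 4 * C / (2 * a) := by
    intro p
    rw [abs_div, abs_of_pos (by positivity : (0:ℝ) < 2 * a)]
    exact div_le_div_of_nonneg_right (hrb p.1 p.2) (by positivity) |>.trans_eq rfl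
  have hrdivmem : MemLp (fun p : α × β => r p.1 p.2 / (2 * a)) 2 (μ.prod ν) :=
    my_memLp_of_bdd _ mrdiv hrdivb
  have hDmem : MemLp D 2 (μ.prod ν) := (hL2.sub (memLp_const 1)).sub hrdivmem
  have hDint : Integrable D (μ.prod ν) := hDmem.integrable one_le_two
  have hDsq : Integrable (fun p => D p ^ 2) (μ.prod ν) := hDmem.integrable_sq
  have hLint : Integrable L (μ.prod ν) := hL2.integrable one_le_two
  have mD : Measurable D := (hLm.sub measurable_const).sub mrdiv
  -- vanishing of marginal integrals of D
  have hrdivint : ∀ x : α, Integrable (fun y => r x y / (2 * a)) ν := fun x =>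
    my_integrable_of_bdd ν ((mr.comp measurable_prodMk_left).div_const _)
      (fun y => hrdivb (x, y))
  have hrdivint' : ∀ y : β, Integrable (fun x => r x y / (2 * a)) μ := fun y =>
    my_integrable_of_bdd μ ((mr.comp measurable_prodMk_right).div_const _)
      (fun x => hrdivb (x, y))
  have hDν : ∀ᵐ x ∂μ, ∫ y, D (x, y) ∂ν = 0 := by
    filter_upwards [hLX, hLint.prod_right_ae] with x hx hxi
    have : ∫ y, D (x, y) ∂ν
        = (∫ y, L (x, y) ∂ν) - 1 - (∫ y, r x y ∂ν) / (2 * a) := by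
      simp only [hDdef]
      have hA : Integrable (fun y => L (x, y) - 1) ν := hxi.sub (integrable_const 1)
      rw [integral_sub hA (hrdivint x),
        integral_sub hxi (integrable_const 1), integral_div]
      simp
    rw [this, hx, hrν x]; simp
  have hDμ : ∀ᵐ y ∂ν, ∫ x, D (x, y) ∂μ = 0 := by
    filter_upwards [hLY, hLint.prod_left_ae] with y hy hyi
    have : ∫ x, D (x, y) ∂μ
        = (∫ x, L (x, y) ∂μ) - 1 - (∫ x, r x y ∂μ) / (2 * a) := by
      simp only [hDdef]
      have hA : Integrable (fun x => L (x, y) - 1) μ := hyi.sub (integrable_const 1)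
      rw [integral_sub hA (hrdivint' y),
        integral_sub hyi (integrable_const 1), integral_div]
      simp
    rw [this, hy, hrμ y]; simp
  -- the three vanishing product integrals
  have hg₁D : Integrable (fun p : α × β => g₁ p.1 * D p) (μ.prod ν) :=
    hDint.bdd_mul (mg₁.comp measurable_fst).aestronglyMeasurable
      (Filter.Eventually.of_forall fun p => by simpa using hg₁b p.1)
  have hg₂D : Integrable (fun p : α × β => g₂ p.2 * D p) (μ.prod ν) :=
    hDint.bdd_mul (mg₂.comp measurable_snd).aestronglyMeasurable
      (Filter.Eventually.of_forall fun p => by simpa using hg₂b p.2)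
  have I1 : ∫ p : α × β, g₁ p.1 * D p ∂(μ.prod ν) = 0 := by
    rw [integral_prod _ hg₁D]
    have : ∀ᵐ x ∂μ, ∫ y, g₁ x * D (x, y) ∂ν = 0 := by
      filter_upwards [hDν] with x hx
      rw [integral_const_mul, hx, mul_zero]
    rw [integral_congr_ae this, integral_zero]
  have I2 : ∫ p : α × β, g₂ p.2 * D p ∂(μ.prod ν) = 0 := by
    rw [integral_prod_symm _ hg₂D]
    have : ∀ᵐ y ∂ν, ∫ x, g₂ y * D (x, y) ∂μ = 0 := by
      filter_upwards [hDμ] with y hy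
      rw [integral_const_mul, hy, mul_zero]
    rw [integral_congr_ae this, integral_zero]
  have ID : ∫ p : α × β, D p ∂(μ.prod ν) = 0 := by
    rw [integral_prod _ hDint]
    rw [integral_congr_ae hDν, integral_zero]
  -- G := g₁ + g₂ - c ;  ∫ G·D = 0
  have hGD : Integrable (fun p : α × β => (g₁ p.1 + g₂ p.2 - c) * D p) (μ.prod ν) := by
    have : (fun p : α × β => (g₁ p.1 + g₂ p.2 - c) * D p)
        = fun p => g₁ p.1 * D p + g₂ p.2 * D p - c * D p := by
      funext p; ring
    rw [this]
    exact (hg₁D.add hg₂D).sub (hDint.const_mul c)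
  have IG : ∫ p : α × β, (g₁ p.1 + g₂ p.2 - c) * D p ∂(μ.prod ν) = 0 := by
    have e : (fun p : α × β => (g₁ p.1 + g₂ p.2 - c) * D p)
        = fun p => g₁ p.1 * D p + g₂ p.2 * D p - c * D p := by
      funext p; ring
    have hA : Integrable (fun p : α × β => g₁ p.1 * D p + g₂ p.2 * D p) (μ.prod ν) :=
      hg₁D.add hg₂D
    rw [e, integral_sub hA (hDint.const_mul c),
      integral_add hg₁D hg₂D, integral_const_mul, I1, I2, ID]
    ring
  -- integrabilities for the final split
  have hHL : Integrable (fun p : α × β => h p.1 p.2 * L p) (μ.prod ν) :=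
    hLint.bdd_mul mh.aestronglyMeasurable (Filter.Eventually.of_forall fun p => by simpa using hbdd p.1 p.2)
  have hL1sq : Integrable (fun p : α × β => (L p - 1) ^ 2) (μ.prod ν) :=
    (hL2.sub (memLp_const 1)).integrable_sq
  have hHLs : Integrable (fun p : α × β => h p.1 p.2 * (1 + r p.1 p.2 / (2 * a))) (μ.prod ν) :=
    my_integrable_of_bdd _ (mh.mul (measurable_const.add mrdiv))
      (C := C * (1 + 4 * C / (2 * a))) (fun p => by
        rw [abs_mul]
        have h1 := hbdd p.1 p.2
        have h2 : |1 + r p.1 p.2 / (2 * a)| ≤ 1 + 4 * C / (2 * a) := by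
          have := hrdivb p
          rw [abs_le] at this ⊢
          constructor <;> linarith
        have hC0 : 0 ≤ C := (abs_nonneg _).trans (hbdd p.1 p.2)
        exact mul_le_mul h1 h2 (abs_nonneg _) hC0)
  have hLs1sq : Integrable (fun p : α × β => ((1 + r p.1 p.2 / (2 * a)) - 1) ^ 2) (μ.prod ν) :=
    my_integrable_of_bdd _ (((measurable_const.add mrdiv).sub measurable_const).pow_const 2)
      (C := (4 * C / (2 * a)) ^ 2) (fun p => by
        have := hrdivb p
        rw [abs_pow]
        calc |1 + r p.1 p.2 / (2 * a) - 1| ^ 2 = |r p.1 p.2 / (2 * a)| ^ 2 := by ring_nf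
          _ ≤ (4 * C / (2 * a)) ^ 2 := by
              exact pow_le_pow_left₀ (abs_nonneg _) this 2)
  -- pointwise identity
  have peq : ∀ p : α × β,
      a * D p ^ 2 - (g₁ p.1 + g₂ p.2 - c) * D p
        = h p.1 p.2 * (1 + r p.1 p.2 / (2 * a)) - a * ((1 + r p.1 p.2 / (2 * a)) - 1) ^ 2
          - h p.1 p.2 * L p + a * (L p - 1) ^ 2 := by
    intro p
    have hG : g₁ p.1 + g₂ p.2 - c = h p.1 p.2 - r p.1 p.2 := by
      have := hr' p.1 p.2; linarith
    rw [hG]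
    simp only [hDdef]
    field_simp
    ring
  -- assemble
  have split : ∫ p : α × β, (a * D p ^ 2 - (g₁ p.1 + g₂ p.2 - c) * D p) ∂(μ.prod ν)
      = (∫ p : α × β, h p.1 p.2 * (1 + r p.1 p.2 / (2 * a)) ∂(μ.prod ν))
        - a * (∫ p : α × β, ((1 + r p.1 p.2 / (2 * a)) - 1) ^ 2 ∂(μ.prod ν))
        - (∫ p : α × β, h p.1 p.2 * L p ∂(μ.prod ν))
        + a * (∫ p : α × β, (L p - 1) ^ 2 ∂(μ.prod ν)) := by
    rw [integral_congr_ae (Filter.Eventually.of_forall peq)]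
    have hA : Integrable (fun p : α × β =>
        h p.1 p.2 * (1 + r p.1 p.2 / (2 * a)) - a * ((1 + r p.1 p.2 / (2 * a)) - 1) ^ 2)
        (μ.prod ν) := hHLs.sub (hLs1sq.const_mul a)
    have hB : Integrable (fun p : α × β =>
        h p.1 p.2 * (1 + r p.1 p.2 / (2 * a)) - a * ((1 + r p.1 p.2 / (2 * a)) - 1) ^ 2
          - h p.1 p.2 * L p) (μ.prod ν) := hA.sub hHL
    rw [integral_add hB (hL1sq.const_mul a),
      integral_sub hA hHL,
      integral_sub hHLs (hLs1sq.const_mul a),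
      integral_const_mul, integral_const_mul]
  have split2 : ∫ p : α × β, (a * D p ^ 2 - (g₁ p.1 + g₂ p.2 - c) * D p) ∂(μ.prod ν)
      = a * ∫ p : α × β, D p ^ 2 ∂(μ.prod ν) := by
    rw [integral_sub (hDsq.const_mul a) hGD, integral_const_mul, IG, sub_zero]
  have hnn : 0 ≤ ∫ p : α × β, D p ^ 2 ∂(μ.prod ν) :=
    integral_nonneg fun p => sq_nonneg _
  nlinarith [split, split2, mul_nonneg ha.le hnn]
end

section
/- (Equivalence of measure-level and likelihood-ratio formulations) Let P₀ make X₁,...,X_T i.i.d. Given any measurable L ≥ 0 with E₀[L(X,Y)|X] = E₀[L(X,Y)|Y] = 1 a.s., the Markov process defined by initial law P₀(x₁) and kernel dP_f(x_t|x_{t−1}) = L(x_{t−1},x_t) dP₀(x_t) is a stationary 1-dependent process whose one-step marginal equals the P₀ marginal, and E_f[h(X₁,...,X_T)] = E₀[h(X₁,...,X_T) ∏_{t=2}^T L(X_{t−1},X_t)] for any bounded measurable h. -/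
open MeasureTheory Finset Function
open scoped ENNReal NNReal

namespace MLRAux

variable {α : Type*} [MeasurableSpace α] {μ : Measure α} [IsProbabilityMeasure μ] {T : ℕ}

/-- product of edge weights over a finset of edges -/
noncomputable def W (ℓ : α → α → ℝ≥0∞) (s : Finset (Fin T)) (x : Fin (T + 1) → α) : ℝ≥0∞ :=
  ∏ i ∈ s, ℓ (x i.castSucc) (x i.succ)

theorem W_measurable {ℓ : α → α → ℝ≥0∞} (hℓ : Measurable (Function.uncurry ℓ))
    (s : Finset (Fin T)) : Measurable (W ℓ s) :=
  Finset.measurable_prod _ fun i _ => by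
    have : Measurable fun a : Fin (T + 1) → α =>
        Function.uncurry ℓ (a i.castSucc, a i.succ) :=
      hℓ.comp ((measurable_pi_apply i.castSucc).prodMk (measurable_pi_apply i.succ))
    exact this

theorem W_congr {ℓ : α → α → ℝ≥0∞} {s : Finset (Fin T)} {x y : Fin (T + 1) → α}
    (h : ∀ i ∈ s, x i.castSucc = y i.castSucc ∧ x i.succ = y i.succ) : W ℓ s x = W ℓ s y :=
  Finset.prod_congr rfl fun i hi => by rw [(h i hi).1, (h i hi).2]

theorem lmarginal_mul_left {s : Finset (Fin (T + 1))} {g f : (Fin (T + 1) → α) → ℝ≥0∞}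
    (hf : Measurable f) (hg : ∀ x y : Fin (T + 1) → α, (∀ i, i ∉ s → x i = y i) → g x = g y)
    (x : Fin (T + 1) → α) :
    (∫⋯∫⁻_s, (fun z => g z * f z) ∂(fun _ => μ)) x = g x * (∫⋯∫⁻_s, f ∂(fun _ => μ)) x := by
  rw [lmarginal, lmarginal]
  have h1 : ∀ y : (i : s) → α, g (updateFinset x s y) * f (updateFinset x s y)
      = g x * f (updateFinset x s y) := fun y => by
    rw [hg (updateFinset x s y) x (fun i hi => by simp [updateFinset, hi])]
  rw [lintegral_congr h1]
  exact lintegral_const_mul _ (hf.comp measurable_updateFinset)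

theorem lmarginal_one {s : Finset (Fin (T + 1))} (x : Fin (T + 1) → α) :
    (∫⋯∫⁻_s, (fun _ => (1 : ℝ≥0∞)) ∂(fun _ => μ)) x = 1 := by
  rw [lmarginal, lintegral_one, measure_univ]

theorem lmarginal_congr_of_dep {s : Finset (Fin (T + 1))} {f : (Fin (T + 1) → α) → ℝ≥0∞}
    {A : Set (Fin (T + 1))}
    (hf : ∀ x y, (∀ i ∈ A, x i = y i) → f x = f y)
    {x y : Fin (T + 1) → α} (hxy : ∀ i ∈ A, i ∉ s → x i = y i) :
    (∫⋯∫⁻_s, f ∂(fun _ => μ)) x = (∫⋯∫⁻_s, f ∂(fun _ => μ)) y := by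
  rw [lmarginal, lmarginal]
  refine lintegral_congr fun z => hf _ _ fun i hi => ?_
  by_cases his : i ∈ s
  · simp [updateFinset, his]
  · simp [updateFinset, his, hxy i hi his]

/-- top `k` vertices: those with value `> T - k` -/
def VF (T k : ℕ) : Finset (Fin (T + 1)) := Finset.univ.filter fun v => T + 1 ≤ (v : ℕ) + k
/-- top `k` edges: those with value `≥ T - k` -/
def EF (T k : ℕ) : Finset (Fin T) := Finset.univ.filter fun i => T ≤ (i : ℕ) + k
/-- bottom `k` vertices -/
def VP (T k : ℕ) : Finset (Fin (T + 1)) := Finset.univ.filter fun v => (v : ℕ) < k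
/-- bottom `k` edges -/
def EP (T k : ℕ) : Finset (Fin T) := Finset.univ.filter fun i => (i : ℕ) < k

theorem lmarginal_WF {ℓ : α → α → ℝ≥0∞} (hℓ : Measurable (Function.uncurry ℓ))
    (hrow : ∀ a, ∫⁻ b, ℓ a b ∂μ = 1) :
    ∀ k, k ≤ T → ∀ x, (∫⋯∫⁻_(VF T k), W ℓ (EF T k) ∂(fun _ => μ)) x = 1 := by
  intro k
  induction k with
  | zero =>
    intro _ x
    have hV : VF T 0 = ∅ := by
      ext v; have := v.isLt
      simp only [VF, mem_filter, mem_univ, true_and, Finset.notMem_empty, iff_false]; omega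
    have hE : EF T 0 = ∅ := by
      ext i; have := i.isLt
      simp only [EF, mem_filter, mem_univ, true_and, Finset.notMem_empty, iff_false]; omega
    rw [hV, hE]
    simp [W]
  | succ k ih =>
    intro hk x
    have hkT : k ≤ T := Nat.le_of_succ_le hk
    set v : Fin (T + 1) := ⟨T - k, by omega⟩ with hv
    set e : Fin T := ⟨T - (k + 1), by omega⟩ with he
    have hvmem : v ∉ VF T k := by simp [VF, hv]; omega
    have hVk : VF T (k + 1) = insert v (VF T k) := by
      ext w
      have := w.isLt
      simp [VF, Fin.ext_iff, hv]
      omega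
    have hemem : e ∉ EF T k := by simp [EF, he]; omega
    have hEk : EF T (k + 1) = insert e (EF T k) := by
      ext i
      have := i.isLt
      simp [EF, Fin.ext_iff, he]
      omega
    have hWm : Measurable (W ℓ (EF T (k + 1))) := W_measurable hℓ _
    rw [hVk, lmarginal_insert _ hWm hvmem]
    have hsplit : W ℓ (EF T (k + 1))
        = fun z => (fun w => ℓ (w e.castSucc) (w e.succ)) z * W ℓ (EF T k) z := by
      funext z
      rw [hEk]
      exact Finset.prod_insert hemem
    calc ∫⁻ y, (∫⋯∫⁻_(VF T k), W ℓ (EF T (k + 1)) ∂fun _ => μ) (update x v y) ∂μ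
        = ∫⁻ y, ℓ ((update x v y) e.castSucc) ((update x v y) e.succ) *
            (∫⋯∫⁻_(VF T k), W ℓ (EF T k) ∂fun _ => μ) (update x v y) ∂μ := by
          refine lintegral_congr fun y => ?_
          rw [hsplit, lmarginal_mul_left (W_measurable hℓ _) ?_]
          intro a b hab
          rw [hab _ (by simp [VF, he] <;> omega), hab _ (by simp [VF, he] <;> omega)]
      _ = ∫⁻ y, ℓ (x e.castSucc) y ∂μ := by
          refine lintegral_congr fun y => ?_
          have h1 : update x v y e.castSucc = x e.castSucc := by
            apply Function.update_of_ne
            simp [Fin.ext_iff, hv, he]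
            omega
          have h2 : update x v y e.succ = y := by
            have hev : e.succ = v := by
              rw [Fin.ext_iff]
              simp [hv, he]
              omega
            rw [hev, Function.update_self]
          rw [h1, h2, ih hkT, mul_one]
      _ = 1 := hrow _

theorem lmarginal_WP {ℓ : α → α → ℝ≥0∞} (hℓ : Measurable (Function.uncurry ℓ))
    (hcol : ∀ b, ∫⁻ a, ℓ a b ∂μ = 1) :
    ∀ k, k ≤ T → ∀ x, (∫⋯∫⁻_(VP T k), W ℓ (EP T k) ∂(fun _ => μ)) x = 1 := by
  intro k
  induction k with
  | zero =>
    intro _ x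
    have hV : VP T 0 = ∅ := by
      ext v
      simp only [VP, mem_filter, mem_univ, true_and, Finset.notMem_empty, iff_false]; omega
    have hE : EP T 0 = ∅ := by
      ext i
      simp only [EP, mem_filter, mem_univ, true_and, Finset.notMem_empty, iff_false]; omega
    rw [hV, hE]
    simp [W]
  | succ k ih =>
    intro hk x
    have hkT : k ≤ T := Nat.le_of_succ_le hk
    set v : Fin (T + 1) := ⟨k, by omega⟩ with hv
    set e : Fin T := ⟨k, by omega⟩ with he
    have hvmem : v ∉ VP T k := by simp [VP, hv]
    have hVk : VP T (k + 1) = insert v (VP T k) := by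
      ext w
      have := w.isLt
      simp [VP, Fin.ext_iff, hv]
      omega
    have hemem : e ∉ EP T k := by simp [EP, he]
    have hEk : EP T (k + 1) = insert e (EP T k) := by
      ext i
      have := i.isLt
      simp [EP, Fin.ext_iff, he]
      omega
    have hWm : Measurable (W ℓ (EP T (k + 1))) := W_measurable hℓ _
    rw [hVk, lmarginal_insert _ hWm hvmem]
    have hsplit : W ℓ (EP T (k + 1))
        = fun z => (fun w => ℓ (w e.castSucc) (w e.succ)) z * W ℓ (EP T k) z := by
      funext z
      rw [hEk]
      exact Finset.prod_insert hemem
    calc ∫⁻ y, (∫⋯∫⁻_(VP T k), W ℓ (EP T (k + 1)) ∂fun _ => μ) (update x v y) ∂μ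
        = ∫⁻ y, ℓ ((update x v y) e.castSucc) ((update x v y) e.succ) *
            (∫⋯∫⁻_(VP T k), W ℓ (EP T k) ∂fun _ => μ) (update x v y) ∂μ := by
          refine lintegral_congr fun y => ?_
          rw [hsplit, lmarginal_mul_left (W_measurable hℓ _) ?_]
          intro a b hab
          rw [hab _ (by simp [VP, he]), hab _ (by simp [VP, he])]
      _ = ∫⁻ y, ℓ y (x e.succ) ∂μ := by
          refine lintegral_congr fun y => ?_
          have h1 : update x v y e.succ = x e.succ := by
            apply Function.update_of_ne
            simp [Fin.ext_iff, hv, he]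
          have h2 : update x v y e.castSucc = y := by
            have hev : e.castSucc = v := by
              rw [Fin.ext_iff]
              simp [hv, he]
            rw [hev, Function.update_self]
          rw [h1, h2, ih hkT, mul_one]
      _ = 1 := hcol _


theorem K3 [Nonempty α] {ℓ : α → α → ℝ≥0∞} (hℓ : Measurable (Function.uncurry ℓ))
    (t : Fin (T + 1)) (Θ : α → ℝ≥0∞) (hΘ : Measurable Θ)
    {φ ψ : (Fin (T + 1) → α) → ℝ≥0∞} (hφ : Measurable φ) (hψ : Measurable ψ)
    (Hφ : ∀ x y, (∀ s : Fin (T + 1), (s : ℕ) ≤ (t : ℕ) → x s = y s) → φ x = φ y)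
    (Hψ : ∀ x y, (∀ s : Fin (T + 1), (t : ℕ) ≤ (s : ℕ) → x s = y s) → ψ x = ψ y) :
    ∫⁻ x, Θ (x t) * φ x * ψ x * W ℓ Finset.univ x ∂(Measure.pi fun _ : Fin (T + 1) => μ)
      = ∫⁻ z, Θ z
          * (∫⋯∫⁻_(VP T (t : ℕ)), (fun x => φ x * W ℓ (EP T (t : ℕ)) x) ∂(fun _ => μ)) (fun _ => z)
          * (∫⋯∫⁻_(VF T (T - (t : ℕ))),
              (fun x => ψ x * W ℓ (EF T (T - (t : ℕ))) x) ∂(fun _ => μ)) (fun _ => z) ∂μ := by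
  classical
  have htT : (t : ℕ) ≤ T := by have := t.isLt; omega
  set k := T - (t : ℕ) with hkdef
  set P : (Fin (T + 1) → α) → ℝ≥0∞ :=
    ∫⋯∫⁻_(VP T (t : ℕ)), (fun x => φ x * W ℓ (EP T (t : ℕ)) x) ∂(fun _ => μ) with hP
  set Q : (Fin (T + 1) → α) → ℝ≥0∞ :=
    ∫⋯∫⁻_(VF T k), (fun x => ψ x * W ℓ (EF T k) x) ∂(fun _ => μ) with hQ
  have hVPmem : ∀ w : Fin (T + 1), w ∈ VP T (t : ℕ) ↔ (w : ℕ) < (t : ℕ) := fun w => by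
    simp [VP]
  have hVFmem : ∀ w : Fin (T + 1), w ∈ VF T k ↔ (t : ℕ) < (w : ℕ) := fun w => by
    have := w.isLt; simp only [VF, mem_filter, mem_univ, true_and]; omega
  have hEPmem : ∀ i : Fin T, i ∈ EP T (t : ℕ) ↔ (i : ℕ) < (t : ℕ) := fun i => by simp [EP]
  have hEFmem : ∀ i : Fin T, i ∈ EF T k ↔ (t : ℕ) ≤ (i : ℕ) := fun i => by
    have := i.isLt; simp only [EF, mem_filter, mem_univ, true_and]; omega
  have hVsplit : (Finset.univ : Finset (Fin (T + 1))) = {t} ∪ (VP T (t : ℕ) ∪ VF T k) := by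
    ext w
    have := w.isLt
    simp only [mem_univ, Finset.mem_union, Finset.mem_singleton, hVPmem w, hVFmem w, true_iff,
      Fin.ext_iff]
    omega
  have hd2 : Disjoint (VP T (t : ℕ)) (VF T k) := by
    rw [Finset.disjoint_left]; intro w hw hw'; rw [hVPmem] at hw; rw [hVFmem] at hw'; omega
  have hd1 : Disjoint ({t} : Finset (Fin (T + 1))) (VP T (t : ℕ) ∪ VF T k) := by
    rw [Finset.disjoint_left]; intro w hw hw'
    rw [Finset.mem_singleton] at hw; subst hw
    rcases Finset.mem_union.1 hw' with h | h
    · rw [hVPmem] at h; omega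
    · rw [hVFmem] at h; omega
  have hdE : Disjoint (EP T (t : ℕ)) (EF T k) := by
    rw [Finset.disjoint_left]; intro j h h'; rw [hEPmem] at h; rw [hEFmem] at h'; omega
  have hEsplit : (Finset.univ : Finset (Fin T)) = EP T (t : ℕ) ∪ EF T k := by
    ext j; simp only [mem_univ, Finset.mem_union, hEPmem j, hEFmem j, true_iff]; omega
  set F : (Fin (T + 1) → α) → ℝ≥0∞ := fun x => Θ (x t) * φ x * ψ x * W ℓ Finset.univ x with hF
  have hFmeas : Measurable F :=
    (((hΘ.comp (measurable_pi_apply t)).mul hφ).mul hψ).mul (W_measurable hℓ _)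
  have hWsplit : ∀ x, W ℓ Finset.univ x = W ℓ (EP T (t : ℕ)) x * W ℓ (EF T k) x := fun x => by
    rw [W, hEsplit, Finset.prod_union hdE]; rfl
  have hQdep : ∀ a b : Fin (T + 1) → α, a t = b t → Q a = Q b := by
    intro a b hab
    refine lmarginal_congr_of_dep (A := {s : Fin (T + 1) | (t : ℕ) ≤ (s : ℕ)}) ?_ ?_
    · intro x y hxy
      have hψxy : ψ x = ψ y := Hψ x y (fun s hs => hxy s hs)
      have hW : W ℓ (EF T k) x = W ℓ (EF T k) y := W_congr (fun j hj => by
        rw [hEFmem] at hj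
        exact ⟨hxy _ (by simp only [Set.mem_setOf_eq, Fin.coe_castSucc]; omega),
               hxy _ (by simp only [Set.mem_setOf_eq, Fin.val_succ]; omega)⟩)
      simp only [hψxy, hW]
    · intro j hj hjs
      rw [Set.mem_setOf_eq] at hj
      rw [hVFmem] at hjs
      have hjt : j = t := Fin.ext (by omega)
      rw [hjt]; exact hab
  have hPdep : ∀ a b : Fin (T + 1) → α, a t = b t → P a = P b := by
    intro a b hab
    refine lmarginal_congr_of_dep (A := {s : Fin (T + 1) | (s : ℕ) ≤ (t : ℕ)}) ?_ ?_
    · intro x y hxy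
      have hφxy : φ x = φ y := Hφ x y (fun s hs => hxy s hs)
      have hW : W ℓ (EP T (t : ℕ)) x = W ℓ (EP T (t : ℕ)) y := W_congr (fun j hj => by
        rw [hEPmem] at hj
        exact ⟨hxy _ (by simp only [Set.mem_setOf_eq, Fin.coe_castSucc]; omega),
               hxy _ (by simp only [Set.mem_setOf_eq, Fin.val_succ]; omega)⟩)
      simp only [hφxy, hW]
    · intro j hj hjs
      rw [Set.mem_setOf_eq] at hj
      rw [hVPmem] at hjs
      have hjt : j = t := Fin.ext (by omega)
      rw [hjt]; exact hab
  have hstep1 : (∫⋯∫⁻_(VF T k), F ∂fun _ => μ)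
      = fun x => (Θ (x t) * φ x * W ℓ (EP T (t : ℕ)) x) * Q x := by
    funext x
    have hFdecomp : F = fun z => (fun w => Θ (w t) * φ w * W ℓ (EP T (t : ℕ)) w) z *
        ((fun w => ψ w * W ℓ (EF T k) w) z) := by
      funext z
      simp only [hF]
      rw [hWsplit z]; ring
    rw [hFdecomp]
    refine lmarginal_mul_left (hψ.mul (W_measurable hℓ _)) ?_ x
    intro a b hab
    have hat : a t = b t := hab t (by rw [hVFmem]; omega)
    have hφab : φ a = φ b := Hφ a b (fun s hs => hab s (by rw [hVFmem]; omega))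
    have hW : W ℓ (EP T (t : ℕ)) a = W ℓ (EP T (t : ℕ)) b := W_congr (fun j hj => by
      rw [hEPmem] at hj
      constructor
      · exact hab _ (by rw [hVFmem]; simp only [Fin.coe_castSucc]; omega)
      · exact hab _ (by rw [hVFmem]; simp only [Fin.val_succ]; omega))
    rw [hat, hφab, hW]
  have hstep2 : (∫⋯∫⁻_(VP T (t : ℕ)),
        (fun x => (Θ (x t) * φ x * W ℓ (EP T (t : ℕ)) x) * Q x) ∂fun _ => μ)
      = fun x => (Θ (x t) * Q x) * P x := by
    funext x
    have hdec : (fun x => (Θ (x t) * φ x * W ℓ (EP T (t : ℕ)) x) * Q x)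
        = fun z => (fun w => Θ (w t) * Q w) z * ((fun w => φ w * W ℓ (EP T (t : ℕ)) w) z) := by
      funext z; ring
    rw [hdec]
    refine lmarginal_mul_left (hφ.mul (W_measurable hℓ _)) ?_ x
    intro a b hab
    have hat : a t = b t := hab t (by rw [hVPmem]; omega)
    rw [hat, hQdep a b hat]
  let x₀ : Fin (T + 1) → α := fun _ => Classical.arbitrary α
  rw [lintegral_eq_lmarginal_univ (f := F) x₀, hVsplit,
    lmarginal_union (fun _ => μ) F hFmeas hd1, lmarginal_union (fun _ => μ) F hFmeas hd2,
    hstep1, hstep2, lmarginal_singleton]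
  refine lintegral_congr fun z => ?_
  have h1 : update x₀ t z t = z := Function.update_self _ _ _
  have h2 : Q (update x₀ t z) = Q (fun _ => z) := hQdep _ _ (by rw [h1])
  have h3 : P (update x₀ t z) = P (fun _ => z) := hPdep _ _ (by rw [h1])
  simp only [h1, h2, h3]
  ring


theorem P_le_one {ℓ : α → α → ℝ≥0∞} (hℓ : Measurable (Function.uncurry ℓ))
    (hcol : ∀ b, ∫⁻ a, ℓ a b ∂μ = 1) {φ : (Fin (T + 1) → α) → ℝ≥0∞} (hφ1 : ∀ x, φ x ≤ 1)
    (k : ℕ) (hk : k ≤ T) (x : Fin (T + 1) → α) :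
    (∫⋯∫⁻_(VP T k), (fun x => φ x * W ℓ (EP T k) x) ∂(fun _ => μ)) x ≤ 1 := by
  calc (∫⋯∫⁻_(VP T k), (fun x => φ x * W ℓ (EP T k) x) ∂(fun _ => μ)) x
      ≤ (∫⋯∫⁻_(VP T k), W ℓ (EP T k) ∂(fun _ => μ)) x := by
        refine lmarginal_mono (fun z => ?_) x
        calc φ z * W ℓ (EP T k) z ≤ 1 * W ℓ (EP T k) z := mul_le_mul_left (hφ1 z) _
          _ = W ℓ (EP T k) z := one_mul _
    _ = 1 := lmarginal_WP hℓ hcol k hk x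

theorem F_le_one {ℓ : α → α → ℝ≥0∞} (hℓ : Measurable (Function.uncurry ℓ))
    (hrow : ∀ a, ∫⁻ b, ℓ a b ∂μ = 1) {ψ : (Fin (T + 1) → α) → ℝ≥0∞} (hψ1 : ∀ x, ψ x ≤ 1)
    (k : ℕ) (hk : k ≤ T) (x : Fin (T + 1) → α) :
    (∫⋯∫⁻_(VF T k), (fun x => ψ x * W ℓ (EF T k) x) ∂(fun _ => μ)) x ≤ 1 := by
  calc (∫⋯∫⁻_(VF T k), (fun x => ψ x * W ℓ (EF T k) x) ∂(fun _ => μ)) x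
      ≤ (∫⋯∫⁻_(VF T k), W ℓ (EF T k) ∂(fun _ => μ)) x := by
        refine lmarginal_mono (fun z => ?_) x
        calc ψ z * W ℓ (EF T k) z ≤ 1 * W ℓ (EF T k) z := mul_le_mul_left (hψ1 z) _
          _ = W ℓ (EF T k) z := one_mul _
    _ = 1 := lmarginal_WF hℓ hrow k hk x

theorem K4 [Nonempty α] {ℓ : α → α → ℝ≥0∞} (hℓ : Measurable (Function.uncurry ℓ))
    (hrow : ∀ a, ∫⁻ b, ℓ a b ∂μ = 1) (hcol : ∀ b, ∫⁻ a, ℓ a b ∂μ = 1)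
    (i : Fin T) (Ξ : α × α → ℝ≥0∞) (hΞ : Measurable Ξ) :
    ∫⁻ x, Ξ (x i.castSucc, x i.succ) * W ℓ Finset.univ x ∂(Measure.pi fun _ : Fin (T + 1) => μ)
      = ∫⁻ y, Ξ y * ℓ y.1 y.2 ∂(μ.prod μ) := by
  classical
  have hiT : (i : ℕ) < T := i.isLt
  set k := T - ((i : ℕ) + 1) with hkdef
  have hVPmem : ∀ w : Fin (T + 1), w ∈ VP T (i : ℕ) ↔ (w : ℕ) < (i : ℕ) := fun w => by
    simp [VP]
  have hVFmem : ∀ w : Fin (T + 1), w ∈ VF T k ↔ (i : ℕ) + 1 < (w : ℕ) := fun w => by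
    have := w.isLt; simp only [VF, mem_filter, mem_univ, true_and]; omega
  have hEPmem : ∀ j : Fin T, j ∈ EP T (i : ℕ) ↔ (j : ℕ) < (i : ℕ) := fun j => by simp [EP]
  have hEFmem : ∀ j : Fin T, j ∈ EF T k ↔ (i : ℕ) + 1 ≤ (j : ℕ) := fun j => by
    have := j.isLt; simp only [EF, mem_filter, mem_univ, true_and]; omega
  have hicis : i.castSucc ≠ i.succ := (Fin.castSucc_lt_succ : i.castSucc < i.succ).ne
  -- the edge set split
  have hiEF : i ∉ EF T k := by rw [hEFmem]; omega
  have hdE : Disjoint (EP T (i : ℕ)) (insert i (EF T k)) := by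
    rw [Finset.disjoint_left]
    intro j h h'
    rw [hEPmem] at h
    rcases Finset.mem_insert.1 h' with rfl | h'
    · omega
    · rw [hEFmem] at h'; omega
  have hEsplit : (Finset.univ : Finset (Fin T)) = EP T (i : ℕ) ∪ insert i (EF T k) := by
    ext j
    simp only [mem_univ, Finset.mem_union, Finset.mem_insert, hEPmem j, hEFmem j, true_iff,
      Fin.ext_iff]
    omega
  have hWsplit : ∀ x : Fin (T + 1) → α, W ℓ Finset.univ x
      = W ℓ (EP T (i : ℕ)) x * (ℓ (x i.castSucc) (x i.succ) * W ℓ (EF T k) x) := fun x => by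
    rw [W, hEsplit, Finset.prod_union hdE, Finset.prod_insert hiEF]; rfl
  -- vertex split
  have hvic : ∀ w : Fin (T + 1), w = i.castSucc ↔ (w : ℕ) = (i : ℕ) := fun w => by
    rw [Fin.ext_iff]; simp only [Fin.coe_castSucc]
  have hvis : ∀ w : Fin (T + 1), w = i.succ ↔ (w : ℕ) = (i : ℕ) + 1 := fun w => by
    rw [Fin.ext_iff]; simp only [Fin.val_succ]
  have hVsplit : (Finset.univ : Finset (Fin (T + 1)))
      = ({i.castSucc} ∪ {i.succ}) ∪ (VP T (i : ℕ) ∪ VF T k) := by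
    ext w
    have := w.isLt
    simp only [mem_univ, Finset.mem_union, Finset.mem_singleton, hVPmem w, hVFmem w,
      hvic w, hvis w, true_iff]
    omega
  have hd1 : Disjoint (({i.castSucc} : Finset (Fin (T + 1))) ∪ {i.succ})
      (VP T (i : ℕ) ∪ VF T k) := by
    rw [Finset.disjoint_left]
    intro w hw hw'
    rcases Finset.mem_union.1 hw with hw | hw <;> rw [Finset.mem_singleton] at hw <;>
      rcases Finset.mem_union.1 hw' with h | h
    · rw [hvic w] at hw; rw [hVPmem] at h; omega
    · rw [hvic w] at hw; rw [hVFmem] at h; omega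
    · rw [hvis w] at hw; rw [hVPmem] at h; omega
    · rw [hvis w] at hw; rw [hVFmem] at h; omega
  have hd2 : Disjoint ({i.castSucc} : Finset (Fin (T + 1))) ({i.succ} : Finset (Fin (T + 1))) := by
    rw [Finset.disjoint_left]
    intro w hw hw'
    rw [Finset.mem_singleton] at hw hw'
    exact hicis (hw ▸ hw')
  have hd3 : Disjoint (VP T (i : ℕ)) (VF T k) := by
    rw [Finset.disjoint_left]; intro w hw hw'; rw [hVPmem] at hw; rw [hVFmem] at hw'; omega
  set F : (Fin (T + 1) → α) → ℝ≥0∞ :=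
    fun x => Ξ (x i.castSucc, x i.succ) * W ℓ Finset.univ x with hF
  have hΞcomp : Measurable fun x : Fin (T + 1) → α => Ξ (x i.castSucc, x i.succ) := by
    have : Measurable fun x : Fin (T + 1) → α => Ξ ((x i.castSucc, x i.succ)) :=
      hΞ.comp ((measurable_pi_apply i.castSucc).prodMk (measurable_pi_apply i.succ))
    exact this
  have hℓcomp : Measurable fun x : Fin (T + 1) → α => ℓ (x i.castSucc) (x i.succ) := by
    have : Measurable fun x : Fin (T + 1) → α =>
        Function.uncurry ℓ (x i.castSucc, x i.succ) :=
      hℓ.comp ((measurable_pi_apply i.castSucc).prodMk (measurable_pi_apply i.succ))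
    exact this
  have hFmeas : Measurable F := hΞcomp.mul (W_measurable hℓ _)
  have hstep1 : (∫⋯∫⁻_(VF T k), F ∂fun _ => μ)
      = fun x => Ξ (x i.castSucc, x i.succ) * ℓ (x i.castSucc) (x i.succ)
          * W ℓ (EP T (i : ℕ)) x := by
    funext x
    have hFdec : F = fun z =>
        (fun w => Ξ (w i.castSucc, w i.succ) * ℓ (w i.castSucc) (w i.succ)
          * W ℓ (EP T (i : ℕ)) w) z * ((fun w => W ℓ (EF T k) w) z) := by
      funext z; simp only [hF]; rw [hWsplit z]; ring
    rw [hFdec, lmarginal_mul_left (W_measurable hℓ _) ?_ x]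
    · rw [lmarginal_WF hℓ hrow k (by omega) x, mul_one]
    · intro a b hab
      have h1 : a i.castSucc = b i.castSucc := hab _ (by
        rw [hVFmem]; simp only [Fin.coe_castSucc]; omega)
      have h2 : a i.succ = b i.succ := hab _ (by
        rw [hVFmem]; simp only [Fin.val_succ]; omega)
      have hW : W ℓ (EP T (i : ℕ)) a = W ℓ (EP T (i : ℕ)) b := W_congr (fun j hj => by
        rw [hEPmem] at hj
        constructor
        · exact hab _ (by rw [hVFmem]; simp only [Fin.coe_castSucc]; omega)
        · exact hab _ (by rw [hVFmem]; simp only [Fin.val_succ]; omega))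
      rw [h1, h2, hW]
  have hstep2 : (∫⋯∫⁻_(VP T (i : ℕ)),
        (fun x => Ξ (x i.castSucc, x i.succ) * ℓ (x i.castSucc) (x i.succ)
          * W ℓ (EP T (i : ℕ)) x) ∂fun _ => μ)
      = fun x => Ξ (x i.castSucc, x i.succ) * ℓ (x i.castSucc) (x i.succ) := by
    funext x
    have hdec : (fun x => Ξ (x i.castSucc, x i.succ) * ℓ (x i.castSucc) (x i.succ)
          * W ℓ (EP T (i : ℕ)) x)
        = fun z => (fun w => Ξ (w i.castSucc, w i.succ) * ℓ (w i.castSucc) (w i.succ)) z *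
            ((fun w => W ℓ (EP T (i : ℕ)) w) z) := by
      funext z; ring
    rw [hdec, lmarginal_mul_left (W_measurable hℓ _) ?_ x]
    · rw [lmarginal_WP hℓ hcol (i : ℕ) (by omega) x, mul_one]
    · intro a b hab
      have h1 : a i.castSucc = b i.castSucc := hab _ (by
        rw [hVPmem]; simp only [Fin.coe_castSucc]; omega)
      have h2 : a i.succ = b i.succ := hab _ (by
        rw [hVPmem]; simp only [Fin.val_succ]; omega)
      rw [h1, h2]
  let x₀ : Fin (T + 1) → α := fun _ => Classical.arbitrary α
  rw [lintegral_eq_lmarginal_univ (f := F) x₀, hVsplit,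
    lmarginal_union (fun _ => μ) F hFmeas hd1, lmarginal_union (fun _ => μ) F hFmeas hd3,
    hstep1, hstep2, lmarginal_union (fun _ => μ) (fun x => Ξ (x i.castSucc, x i.succ) * ℓ (x i.castSucc) (x i.succ)) (hΞcomp.mul hℓcomp) hd2,
    lmarginal_singleton, lmarginal_singleton]
  have hcalc : ∀ a : α, ∀ x : Fin (T + 1) → α,
      (fun x => ∫⁻ b, (fun w => Ξ (w i.castSucc, w i.succ) * ℓ (w i.castSucc) (w i.succ))
        (update x i.succ b) ∂μ) (update x i.castSucc a)
      = ∫⁻ b, Ξ (a, b) * ℓ a b ∂μ := by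
    intro a x
    simp only
    refine lintegral_congr fun b => ?_
    have e1 : update (update x i.castSucc a) i.succ b i.castSucc = a := by
      rw [Function.update_of_ne hicis, Function.update_self]
    have e2 : update (update x i.castSucc a) i.succ b i.succ = b := Function.update_self _ _ _
    rw [e1, e2]
  have hmeas2 : Measurable fun y : α × α => Ξ y * ℓ y.1 y.2 := hΞ.mul hℓ
  rw [lintegral_prod _ hmeas2.aemeasurable]
  refine lintegral_congr fun a => ?_
  rw [hcalc a x₀]

end MLRAux
open MeasureTheory ProbabilityTheory

/-- equivalence of measure-level and likelihood-ratio formulations: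
Let `P₀` be the `(T+1)`-fold product of a common marginal `μ` (so the coordinates
`X 0, …, X T` are i.i.d. `μ`), and let `L ≥ 0` be measurable with
`E₀[L(X,Y)|X] = E₀[L(X,Y)|Y] = 1` a.s. The measure `P_f` of the Markov process with initial
law `μ` and kernel `dP_f(x_t|x_{t−1}) = L(x_{t−1},x_t) dμ(x_t)` is exactly
`P₀` reweighted by the density `∏_{t=1}^{T} L(x_{t−1},x_t)`; it is a probability measure
which is a stationary 1-dependent (Markov) process: every one-step marginal equals `μ`, the
laws of consecutive pairs are all equal, past and future are conditionally independent
given the present, and `E_f[h(X₀,…,X_T)] = E₀[h(X₀,…,X_T) ∏_{t=1}^{T} L(X_{t−1},X_t)]`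
for every bounded measurable `h`. -/
theorem markov_likelihood_ratio_equivalence
    {α : Type*} [MeasurableSpace α] [StandardBorelSpace α] [Nonempty α]
    (μ : Measure α) [IsProbabilityMeasure μ]
    (T : ℕ)
    (L : α → α → ℝ) (hLmeas : Measurable (Function.uncurry L))
    (hLnonneg : ∀ x y, 0 ≤ L x y)
    (hLX : ∀ᵐ x ∂μ, ∫ y, L x y ∂μ = 1)
    (hLY : ∀ᵐ y ∂μ, ∫ x, L x y ∂μ = 1)
    (P₀ : Measure (Fin (T + 1) → α)) (hP₀ : P₀ = Measure.pi fun _ => μ)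
    (Pf : Measure (Fin (T + 1) → α))
    (hPf : Pf = P₀.withDensity fun x =>
      ENNReal.ofReal (∏ i : Fin T, L (x i.castSucc) (x i.succ))) :
    ∃ _ : IsProbabilityMeasure Pf,
      -- one-step marginals all equal to the `P₀`-marginal `μ`
      (∀ t : Fin (T + 1), Pf.map (fun x => x t) = μ)
      -- stationarity of the process: consecutive-pair laws do not depend on time
      ∧ (∀ i j : Fin T,
          Pf.map (fun x => (x i.castSucc, x i.succ))
            = Pf.map (fun x => (x j.castSucc, x j.succ)))
      -- 1-dependence / Markov property: given the present state `x t`, the past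
      -- `(x s)_{s < t}` and the future `(x s)_{t < s}` are conditionally independent
      ∧ (∀ t : Fin (T + 1),
          CondIndepFun (MeasurableSpace.comap (fun x => x t) inferInstance)
            ((measurable_pi_apply t).comap_le)
            (fun x (s : {s : Fin (T + 1) // s < t}) => x s.1)
            (fun x (s : {s : Fin (T + 1) // t < s}) => x s.1) Pf)
      -- expectation identity for all bounded measurable cost functions
      ∧ (∀ h : (Fin (T + 1) → α) → ℝ, Measurable h → (∃ C, ∀ x, |h x| ≤ C) →
          ∫ x, h x ∂Pf
            = ∫ x, h x * ∏ i : Fin T, L (x i.castSucc) (x i.succ) ∂P₀) := by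
  classical
  subst hP₀
  -- measurability of the real product density
  have hprodmeas : Measurable fun x : Fin (T + 1) → α =>
      ∏ i : Fin T, L (x i.castSucc) (x i.succ) := by
    refine Finset.measurable_prod _ fun i _ => ?_
    have : Measurable fun x : Fin (T + 1) → α =>
        Function.uncurry L (x i.castSucc, x i.succ) :=
      hLmeas.comp ((measurable_pi_apply i.castSucc).prodMk (measurable_pi_apply i.succ))
    exact this
  -- Step 1: an everywhere row- and column-normalized ENNReal kernel ℓ agreeing a.e. with L
  have hLofReal : Measurable fun p : α × α => ENNReal.ofReal (Function.uncurry L p) :=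
    ENNReal.measurable_ofReal.comp hLmeas
  have hmRow : Measurable fun a => ∫⁻ b, ENNReal.ofReal (L a b) ∂μ := by
    exact Measurable.lintegral_prod_right (f := fun a b => ENNReal.ofReal (L a b)) hLofReal
  have hmCol : Measurable fun b => ∫⁻ a, ENNReal.ofReal (L a b) ∂μ := by
    exact Measurable.lintegral_prod_left (f := fun a b => ENNReal.ofReal (L a b)) hLofReal
  set A : Set α := (fun a => ∫⁻ b, ENNReal.ofReal (L a b) ∂μ) ⁻¹' {1} with hAdef
  set B : Set α := (fun b => ∫⁻ a, ENNReal.ofReal (L a b) ∂μ) ⁻¹' {1} with hBdef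
  have hAmeas : MeasurableSet A := hmRow (measurableSet_singleton 1)
  have hBmeas : MeasurableSet B := hmCol (measurableSet_singleton 1)
  have hAae : ∀ᵐ a ∂μ, a ∈ A := by
    filter_upwards [hLX] with a ha
    have hnn : 0 ≤ᵐ[μ] fun b => L a b := Filter.Eventually.of_forall fun b => hLnonneg a b
    have hint : Integrable (fun b => L a b) μ := by
      by_contra hni
      rw [integral_undef hni] at ha
      exact one_ne_zero ha.symm
    have hor := MeasureTheory.ofReal_integral_eq_lintegral_ofReal hint hnn
    show (∫⁻ b, ENNReal.ofReal (L a b) ∂μ) ∈ ({1} : Set ℝ≥0∞)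
    rw [Set.mem_singleton_iff, ← hor, ha, ENNReal.ofReal_one]
  have hBae : ∀ᵐ b ∂μ, b ∈ B := by
    filter_upwards [hLY] with b hb
    have hnn : 0 ≤ᵐ[μ] fun a => L a b := Filter.Eventually.of_forall fun a => hLnonneg a b
    have hint : Integrable (fun a => L a b) μ := by
      by_contra hni
      rw [integral_undef hni] at hb
      exact one_ne_zero hb.symm
    have hor := MeasureTheory.ofReal_integral_eq_lintegral_ofReal hint hnn
    show (∫⁻ a, ENNReal.ofReal (L a b) ∂μ) ∈ ({1} : Set ℝ≥0∞)
    rw [Set.mem_singleton_iff, ← hor, hb, ENNReal.ofReal_one]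
  set S : Set α := A ∩ B with hSdef
  have hSmeas : MeasurableSet S := hAmeas.inter hBmeas
  have hSae : ∀ᵐ a ∂μ, a ∈ S := by
    filter_upwards [hAae, hBae] with a h1 h2
    exact ⟨h1, h2⟩
  have hScnull : μ Sᶜ = 0 := by
    have := ae_iff.mp hSae
    exact this
  set ℓ : α → α → ℝ≥0∞ :=
    fun a b => if a ∈ S ∧ b ∈ S then ENNReal.ofReal (L a b) else 1 with hℓdef
  have hℓmeas : Measurable (Function.uncurry ℓ) := by
    have heq : Function.uncurry ℓ = fun p : α × α =>
        if p ∈ S ×ˢ S then ENNReal.ofReal (Function.uncurry L p) else 1 := by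
      funext p
      simp only [Function.uncurry, hℓdef, Set.mem_prod]
    rw [heq]
    exact Measurable.ite (hSmeas.prod hSmeas) hLofReal measurable_const
  have hrow : ∀ a, ∫⁻ b, ℓ a b ∂μ = 1 := by
    intro a
    by_cases ha : a ∈ S
    · have hae : (fun b => ℓ a b) =ᵐ[μ] fun b => ENNReal.ofReal (L a b) := by
        filter_upwards [hSae] with b hb
        simp only [hℓdef]
        rw [if_pos (show a ∈ S ∧ b ∈ S from ⟨ha, hb⟩)]
      rw [lintegral_congr_ae hae]
      exact ha.1
    · have heq : (fun b => ℓ a b) = fun _ => 1 :=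
        funext fun b => if_neg (fun hc => ha hc.1)
      rw [heq, lintegral_one, measure_univ]
  have hcol : ∀ b, ∫⁻ a, ℓ a b ∂μ = 1 := by
    intro b
    by_cases hb : b ∈ S
    · have hae : (fun a => ℓ a b) =ᵐ[μ] fun a => ENNReal.ofReal (L a b) := by
        filter_upwards [hSae] with a ha
        simp only [hℓdef]
        rw [if_pos (show a ∈ S ∧ b ∈ S from ⟨ha, hb⟩)]
      rw [lintegral_congr_ae hae]
      exact hb.2
    · have heq : (fun a => ℓ a b) = fun _ => 1 :=
        funext fun a => if_neg (fun hc => hb hc.2)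
      rw [heq, lintegral_one, measure_univ]
  -- Step 2: identification of Pf with the withDensity of W ℓ univ
  have hWm : Measurable (MLRAux.W (T := T) ℓ Finset.univ) := MLRAux.W_measurable hℓmeas _
  have hWuniv : (fun x : Fin (T + 1) → α =>
        ENNReal.ofReal (∏ i : Fin T, L (x i.castSucc) (x i.succ)))
      =ᵐ[Measure.pi fun _ : Fin (T + 1) => μ] MLRAux.W (T := T) ℓ Finset.univ := by
    have hcoord : ∀ᵐ x ∂(Measure.pi fun _ : Fin (T + 1) => μ), ∀ s : Fin (T + 1), x s ∈ S := by
      rw [ae_all_iff]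
      intro s
      have : (Measure.pi fun _ : Fin (T + 1) => μ) (Function.eval s ⁻¹' Sᶜ) = 0 :=
        MeasureTheory.Measure.pi_eval_preimage_null _ hScnull
      rw [ae_iff]
      exact this
    filter_upwards [hcoord] with x hx
    rw [ENNReal.ofReal_prod_of_nonneg (fun i _ => hLnonneg _ _)]
    show _ = ∏ i : Fin T, ℓ (x i.castSucc) (x i.succ)
    exact Finset.prod_congr rfl fun i _ => by
      simp only [hℓdef]
      rw [if_pos (show x i.castSucc ∈ S ∧ x i.succ ∈ S from ⟨hx i.castSucc, hx i.succ⟩)]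
  have hPf2 : Pf = (Measure.pi fun _ : Fin (T + 1) => μ).withDensity
      (MLRAux.W (T := T) ℓ Finset.univ) := by
    rw [hPf]
    exact withDensity_congr_ae hWuniv
  have hlint : ∀ g : (Fin (T + 1) → α) → ℝ≥0∞, Measurable g →
      ∫⁻ x, g x ∂Pf
        = ∫⁻ x, g x * MLRAux.W (T := T) ℓ Finset.univ x ∂(Measure.pi fun _ : Fin (T + 1) => μ) := by
    intro g hg
    rw [hPf2, lintegral_withDensity_eq_lintegral_mul _ hWm hg]
    exact lintegral_congr fun x => mul_comm _ _
  -- the indicator-of-set representation of Pf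
  have hPfset : ∀ s : Set (Fin (T + 1) → α), MeasurableSet s →
      Pf s = ∫⁻ x, s.indicator (fun _ => (1 : ℝ≥0∞)) x ∂Pf := by
    intro s hs
    exact (lintegral_indicator_one hs).symm
  -- key computation over Pf
  have keyt : ∀ (t : Fin (T + 1)) (Θ : α → ℝ≥0∞), Measurable Θ →
      ∀ {φ ψ : (Fin (T + 1) → α) → ℝ≥0∞}, Measurable φ → Measurable ψ →
      (∀ x y, (∀ s : Fin (T + 1), (s : ℕ) ≤ (t : ℕ) → x s = y s) → φ x = φ y) →
      (∀ x y, (∀ s : Fin (T + 1), (t : ℕ) ≤ (s : ℕ) → x s = y s) → ψ x = ψ y) →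
      ∫⁻ x, Θ (x t) * φ x * ψ x ∂Pf
        = ∫⁻ z, Θ z
            * (∫⋯∫⁻_(MLRAux.VP T (t : ℕ)),
                (fun x => φ x * MLRAux.W ℓ (MLRAux.EP T (t : ℕ)) x) ∂(fun _ => μ)) (fun _ => z)
            * (∫⋯∫⁻_(MLRAux.VF T (T - (t : ℕ))),
                (fun x => ψ x * MLRAux.W ℓ (MLRAux.EF T (T - (t : ℕ))) x) ∂(fun _ => μ))
                (fun _ => z) ∂μ := by
    intro t Θ hΘ φ ψ hφ hψ Hφ Hψ
    calc ∫⁻ x, Θ (x t) * φ x * ψ x ∂Pf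
        = ∫⁻ x, (fun x => Θ (x t) * φ x * ψ x) x * MLRAux.W (T := T) ℓ Finset.univ x
            ∂(Measure.pi fun _ : Fin (T + 1) => μ) :=
          hlint _ (((hΘ.comp (measurable_pi_apply t)).mul hφ).mul hψ)
      _ = _ := MLRAux.K3 hℓmeas t Θ hΘ hφ hψ Hφ Hψ
  -- the "all mass" lemmas for trivial φ, ψ
  have hPP1 : ∀ (t : Fin (T + 1)) (z : α),
      (∫⋯∫⁻_(MLRAux.VP T (t : ℕ)),
        (fun x => (fun _ : Fin (T + 1) → α => (1 : ℝ≥0∞)) x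
          * MLRAux.W ℓ (MLRAux.EP T (t : ℕ)) x) ∂(fun _ => μ)) (fun _ => z) = 1 := by
    intro t z
    simp only [one_mul]
    exact MLRAux.lmarginal_WP hℓmeas hcol (t : ℕ) (by have := t.isLt; omega) _
  have hQQ1 : ∀ (t : Fin (T + 1)) (z : α),
      (∫⋯∫⁻_(MLRAux.VF T (T - (t : ℕ))),
        (fun x => (fun _ : Fin (T + 1) → α => (1 : ℝ≥0∞)) x
          * MLRAux.W ℓ (MLRAux.EF T (T - (t : ℕ))) x) ∂(fun _ => μ)) (fun _ => z) = 1 := by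
    intro t z
    simp only [one_mul]
    exact MLRAux.lmarginal_WF hℓmeas hrow (T - (t : ℕ)) (by omega) _
  -- deliverable 1 : probability measure
  have hprob : IsProbabilityMeasure Pf := by
    constructor
    have h0 : (0 : Fin (T + 1)) = (0 : Fin (T + 1)) := rfl
    calc Pf Set.univ = ∫⁻ x, Set.univ.indicator (fun _ => (1 : ℝ≥0∞)) x ∂Pf :=
          hPfset _ MeasurableSet.univ
      _ = ∫⁻ x, (fun _ : α => (1 : ℝ≥0∞)) (x 0) * (fun _ : Fin (T + 1) → α => (1 : ℝ≥0∞)) x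
            * (fun _ : Fin (T + 1) → α => (1 : ℝ≥0∞)) x ∂Pf := by
          refine lintegral_congr fun x => ?_
          simp
      _ = ∫⁻ z, (fun _ : α => (1 : ℝ≥0∞)) z
            * (∫⋯∫⁻_(MLRAux.VP T ((0 : Fin (T + 1)) : ℕ)),
                (fun x => (fun _ : Fin (T + 1) → α => (1 : ℝ≥0∞)) x
                  * MLRAux.W ℓ (MLRAux.EP T ((0 : Fin (T + 1)) : ℕ)) x) ∂(fun _ => μ)) (fun _ => z)
            * (∫⋯∫⁻_(MLRAux.VF T (T - ((0 : Fin (T + 1)) : ℕ))),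
                (fun x => (fun _ : Fin (T + 1) → α => (1 : ℝ≥0∞)) x
                  * MLRAux.W ℓ (MLRAux.EF T (T - ((0 : Fin (T + 1)) : ℕ))) x) ∂(fun _ => μ))
                (fun _ => z) ∂μ :=
          keyt 0 _ measurable_const measurable_const measurable_const
            (fun _ _ _ => rfl) (fun _ _ _ => rfl)
      _ = ∫⁻ _z, (1 : ℝ≥0∞) ∂μ := by
          refine lintegral_congr fun z => ?_
          rw [hPP1 0 z, hQQ1 0 z, mul_one, mul_one]
      _ = 1 := by rw [lintegral_one, measure_univ]
  refine ⟨hprob, ?_, ?_, ?_, ?_⟩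
  · -- marginals
    intro t
    ext C hC
    rw [Measure.map_apply (measurable_pi_apply t) hC]
    have hpre : MeasurableSet ((fun x : Fin (T + 1) → α => x t) ⁻¹' C) :=
      measurable_pi_apply t hC
    calc Pf ((fun x => x t) ⁻¹' C)
        = ∫⁻ x, ((fun x : Fin (T + 1) → α => x t) ⁻¹' C).indicator (fun _ => (1 : ℝ≥0∞)) x ∂Pf :=
          hPfset _ hpre
      _ = ∫⁻ x, (fun z => C.indicator (fun _ => (1 : ℝ≥0∞)) z) (x t)
            * (fun _ : Fin (T + 1) → α => (1 : ℝ≥0∞)) x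
            * (fun _ : Fin (T + 1) → α => (1 : ℝ≥0∞)) x ∂Pf := by
          refine lintegral_congr fun x => ?_
          by_cases hx : x t ∈ C <;> simp [hx]
      _ = ∫⁻ z, (fun z => C.indicator (fun _ => (1 : ℝ≥0∞)) z) z
            * (∫⋯∫⁻_(MLRAux.VP T (t : ℕ)),
                (fun x => (fun _ : Fin (T + 1) → α => (1 : ℝ≥0∞)) x
                  * MLRAux.W ℓ (MLRAux.EP T (t : ℕ)) x) ∂(fun _ => μ)) (fun _ => z)
            * (∫⋯∫⁻_(MLRAux.VF T (T - (t : ℕ))),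
                (fun x => (fun _ : Fin (T + 1) → α => (1 : ℝ≥0∞)) x
                  * MLRAux.W ℓ (MLRAux.EF T (T - (t : ℕ))) x) ∂(fun _ => μ)) (fun _ => z) ∂μ :=
          keyt t _ (measurable_const.indicator hC) measurable_const measurable_const
            (fun _ _ _ => rfl) (fun _ _ _ => rfl)
      _ = ∫⁻ z, C.indicator (fun _ => (1 : ℝ≥0∞)) z ∂μ := by
          refine lintegral_congr fun z => ?_
          rw [hPP1 t z, hQQ1 t z, mul_one, mul_one]
      _ = μ C := lintegral_indicator_one hC
  · -- pair laws
    have hpair : ∀ i : Fin T, Pf.map (fun x => (x i.castSucc, x i.succ))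
        = (μ.prod μ).withDensity (fun y => ℓ y.1 y.2) := by
      intro i
      have hpm : Measurable fun x : Fin (T + 1) → α => (x i.castSucc, x i.succ) :=
        (measurable_pi_apply _).prodMk (measurable_pi_apply _)
      ext E hE
      rw [Measure.map_apply hpm hE, withDensity_apply _ hE]
      calc Pf ((fun x => (x i.castSucc, x i.succ)) ⁻¹' E)
          = ∫⁻ x, ((fun x : Fin (T + 1) → α => (x i.castSucc, x i.succ)) ⁻¹' E).indicator
              (fun _ => (1 : ℝ≥0∞)) x ∂Pf := hPfset _ (hpm hE)
        _ = ∫⁻ x, (fun x : Fin (T + 1) → α =>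
              E.indicator (fun _ => (1 : ℝ≥0∞)) (x i.castSucc, x i.succ)) x ∂Pf := by
            refine lintegral_congr fun x => ?_
            by_cases hx : (x i.castSucc, x i.succ) ∈ E <;> simp [hx]
        _ = ∫⁻ x, (fun x : Fin (T + 1) → α =>
              E.indicator (fun _ => (1 : ℝ≥0∞)) (x i.castSucc, x i.succ)) x
              * MLRAux.W (T := T) ℓ Finset.univ x ∂(Measure.pi fun _ : Fin (T + 1) => μ) :=
            hlint _ ((measurable_const.indicator hE).comp hpm)
        _ = ∫⁻ y, E.indicator (fun _ => (1 : ℝ≥0∞)) y * ℓ y.1 y.2 ∂(μ.prod μ) :=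
            MLRAux.K4 hℓmeas hrow hcol i _ (measurable_const.indicator hE)
        _ = ∫⁻ y in E, ℓ y.1 y.2 ∂(μ.prod μ) := by
            rw [← lintegral_indicator hE]
            refine lintegral_congr fun y => ?_
            by_cases hy : y ∈ E <;> simp [hy]
    intro i j
    rw [hpair i, hpair j]
  · -- conditional independence
    intro t
    haveI : IsProbabilityMeasure Pf := hprob
    have hmpast : Measurable fun (x : Fin (T + 1) → α) (s : {s : Fin (T + 1) // s < t}) =>
        x s.1 := measurable_pi_lambda _ fun s => measurable_pi_apply _
    have hmfut : Measurable fun (x : Fin (T + 1) → α) (s : {s : Fin (T + 1) // t < s}) =>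
        x s.1 := measurable_pi_lambda _ fun s => measurable_pi_apply _
    rw [ProbabilityTheory.condIndepFun_iff_condExp_inter_preimage_eq_mul hmpast hmfut]
    intro A' B' hA' hB'
    set U : Set (Fin (T + 1) → α) :=
      (fun x (s : {s : Fin (T + 1) // s < t}) => x s.1) ⁻¹' A' with hUdef
    set V : Set (Fin (T + 1) → α) :=
      (fun x (s : {s : Fin (T + 1) // t < s}) => x s.1) ⁻¹' B' with hVdef
    have hU : MeasurableSet U := hmpast hA'
    have hV : MeasurableSet V := hmfut hB'
    have HU : ∀ x y : Fin (T + 1) → α,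
        (∀ s : Fin (T + 1), (s : ℕ) ≤ (t : ℕ) → x s = y s) → (x ∈ U ↔ y ∈ U) := by
      intro x y hxy
      have hfe : (fun s : {s : Fin (T + 1) // s < t} => x s.1)
          = fun s => y s.1 := funext fun s => hxy s.1 (Nat.le_of_lt s.2)
      simp only [hUdef, Set.mem_preimage, hfe]
    have HV : ∀ x y : Fin (T + 1) → α,
        (∀ s : Fin (T + 1), (t : ℕ) ≤ (s : ℕ) → x s = y s) → (x ∈ V ↔ y ∈ V) := by
      intro x y hxy
      have hfe : (fun s : {s : Fin (T + 1) // t < s} => x s.1)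
          = fun s => y s.1 := funext fun s => hxy s.1 (Nat.le_of_lt s.2)
      simp only [hVdef, Set.mem_preimage, hfe]
    have cond_claim : ∀ U' V' : Set (Fin (T + 1) → α), MeasurableSet U' → MeasurableSet V' →
        (∀ x y : Fin (T + 1) → α,
          (∀ s : Fin (T + 1), (s : ℕ) ≤ (t : ℕ) → x s = y s) → (x ∈ U' ↔ y ∈ U')) →
        (∀ x y : Fin (T + 1) → α,
          (∀ s : Fin (T + 1), (t : ℕ) ≤ (s : ℕ) → x s = y s) → (x ∈ V' ↔ y ∈ V')) →
        (fun x : Fin (T + 1) → α =>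
          ((∫⋯∫⁻_(MLRAux.VP T (t : ℕ)),
              (fun x => U'.indicator (fun _ => (1 : ℝ≥0∞)) x
                * MLRAux.W ℓ (MLRAux.EP T (t : ℕ)) x) ∂(fun _ => μ)) (fun _ => x t)
            * (∫⋯∫⁻_(MLRAux.VF T (T - (t : ℕ))),
              (fun x => V'.indicator (fun _ => (1 : ℝ≥0∞)) x
                * MLRAux.W ℓ (MLRAux.EF T (T - (t : ℕ))) x) ∂(fun _ => μ)) (fun _ => x t)).toReal)
          =ᵐ[Pf] Pf⟦U' ∩ V' | MeasurableSpace.comap (fun x => x t) inferInstance⟧ := by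
      intro U' V' hU' hV' HU' HV'
      set φ : (Fin (T + 1) → α) → ℝ≥0∞ := U'.indicator (fun _ => 1) with hφdef
      set ψ : (Fin (T + 1) → α) → ℝ≥0∞ := V'.indicator (fun _ => 1) with hψdef
      have hφm : Measurable φ := measurable_const.indicator hU'
      have hψm : Measurable ψ := measurable_const.indicator hV'
      have hφ1 : ∀ x, φ x ≤ 1 := fun x => by
        by_cases hx : x ∈ U' <;> simp [hφdef, Set.indicator, hx]
      have hψ1 : ∀ x, ψ x ≤ 1 := fun x => by
        by_cases hx : x ∈ V' <;> simp [hψdef, Set.indicator, hx]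
      have Hφ : ∀ x y : Fin (T + 1) → α,
          (∀ s : Fin (T + 1), (s : ℕ) ≤ (t : ℕ) → x s = y s) → φ x = φ y := by
        intro x y h
        have hiff := HU' x y h
        by_cases hx : x ∈ U'
        · rw [hφdef]
          rw [Set.indicator_of_mem hx, Set.indicator_of_mem (hiff.mp hx)]
        · rw [hφdef]
          rw [Set.indicator_of_notMem hx,
            Set.indicator_of_notMem (fun hy => hx (hiff.mpr hy))]
      have Hψ : ∀ x y : Fin (T + 1) → α,
          (∀ s : Fin (T + 1), (t : ℕ) ≤ (s : ℕ) → x s = y s) → ψ x = ψ y := by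
        intro x y h
        have hiff := HV' x y h
        by_cases hx : x ∈ V'
        · rw [hψdef]
          rw [Set.indicator_of_mem hx, Set.indicator_of_mem (hiff.mp hx)]
        · rw [hψdef]
          rw [Set.indicator_of_notMem hx,
            Set.indicator_of_notMem (fun hy => hx (hiff.mpr hy))]
      set p : α → ℝ≥0∞ := fun z =>
        (∫⋯∫⁻_(MLRAux.VP T (t : ℕ)),
          (fun x => φ x * MLRAux.W ℓ (MLRAux.EP T (t : ℕ)) x) ∂(fun _ => μ)) (fun _ => z)
        with hpdef
      set q : α → ℝ≥0∞ := fun z =>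
        (∫⋯∫⁻_(MLRAux.VF T (T - (t : ℕ))),
          (fun x => ψ x * MLRAux.W ℓ (MLRAux.EF T (T - (t : ℕ))) x) ∂(fun _ => μ)) (fun _ => z)
        with hqdef
      have hpm : Measurable p := by
        exact (Measurable.lmarginal _
            (hφm.mul (MLRAux.W_measurable hℓmeas _))).comp
          (measurable_pi_lambda _ fun _ => measurable_id)
      have hqm : Measurable q := by
        exact (Measurable.lmarginal _
            (hψm.mul (MLRAux.W_measurable hℓmeas _))).comp
          (measurable_pi_lambda _ fun _ => measurable_id)
      have hple : ∀ z, p z ≤ 1 := fun z =>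
        MLRAux.P_le_one hℓmeas hcol hφ1 (t : ℕ) (by have := t.isLt; omega) _
      have hqle : ∀ z, q z ≤ 1 := fun z =>
        MLRAux.F_le_one hℓmeas hrow hψ1 (T - (t : ℕ)) (by omega) _
      set g : (Fin (T + 1) → α) → ℝ := fun x => (p (x t) * q (x t)).toReal with hgdef
      have hpq_meas : Measurable fun x : Fin (T + 1) → α => p (x t) * q (x t) :=
        (hpm.comp (measurable_pi_apply t)).mul (hqm.comp (measurable_pi_apply t))
      have hgmeas : Measurable g := ENNReal.measurable_toReal.comp hpq_meas
      have hgbd : ∀ x : Fin (T + 1) → α, p (x t) * q (x t) ≤ 1 := fun x => by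
        calc p (x t) * q (x t) ≤ 1 * 1 := mul_le_mul' (hple _) (hqle _)
          _ = 1 := one_mul 1
      have hg_integrable : Integrable g Pf := by
        refine Integrable.mono' (integrable_const (1 : ℝ)) hgmeas.aestronglyMeasurable
          (Filter.Eventually.of_forall fun x => ?_)
        rw [Real.norm_eq_abs, abs_of_nonneg ENNReal.toReal_nonneg]
        calc (p (x t) * q (x t)).toReal
            ≤ (1 : ℝ≥0∞).toReal := ENNReal.toReal_mono (by simp) (hgbd x)
          _ = 1 := by simp
      have hg_eq : ∀ s : Set (Fin (T + 1) → α),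
          MeasurableSet[MeasurableSpace.comap (fun x : Fin (T + 1) → α => x t) inferInstance] s →
          Pf s < ⊤ →
          ∫ x in s, g x ∂Pf
            = ∫ x in s, (U' ∩ V').indicator (fun _ => (1 : ℝ)) x ∂Pf := by
        intro s hs _
        obtain ⟨C, hC, rfl⟩ := hs
        have hpre : MeasurableSet ((fun x : Fin (T + 1) → α => x t) ⁻¹' C) :=
          measurable_pi_apply t hC
        have hΘ₁ : Measurable fun z => C.indicator (fun _ => (1 : ℝ≥0∞)) z * (p z * q z) :=
          (measurable_const.indicator hC).mul (hpm.mul hqm)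
        have hL1 : ∫⁻ x in (fun x : Fin (T + 1) → α => x t) ⁻¹' C, p (x t) * q (x t) ∂Pf
            = ∫⁻ z, C.indicator (fun _ => (1 : ℝ≥0∞)) z * (p z * q z) ∂μ := by
          calc ∫⁻ x in (fun x : Fin (T + 1) → α => x t) ⁻¹' C, p (x t) * q (x t) ∂Pf
              = ∫⁻ x, ((fun x : Fin (T + 1) → α => x t) ⁻¹' C).indicator
                  (fun x => p (x t) * q (x t)) x ∂Pf := (lintegral_indicator hpre _).symm
            _ = ∫⁻ x, (fun z => C.indicator (fun _ => (1 : ℝ≥0∞)) z * (p z * q z)) (x t)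
                  * (fun _ : Fin (T + 1) → α => (1 : ℝ≥0∞)) x
                  * (fun _ : Fin (T + 1) → α => (1 : ℝ≥0∞)) x ∂Pf := by
                refine lintegral_congr fun x => ?_
                by_cases hx : x t ∈ C <;> simp [Set.indicator, hx]
            _ = ∫⁻ z, (fun z => C.indicator (fun _ => (1 : ℝ≥0∞)) z * (p z * q z)) z
                  * (∫⋯∫⁻_(MLRAux.VP T (t : ℕ)),
                      (fun x => (fun _ : Fin (T + 1) → α => (1 : ℝ≥0∞)) x
                        * MLRAux.W ℓ (MLRAux.EP T (t : ℕ)) x) ∂(fun _ => μ)) (fun _ => z)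
                  * (∫⋯∫⁻_(MLRAux.VF T (T - (t : ℕ))),
                      (fun x => (fun _ : Fin (T + 1) → α => (1 : ℝ≥0∞)) x
                        * MLRAux.W ℓ (MLRAux.EF T (T - (t : ℕ))) x) ∂(fun _ => μ))
                      (fun _ => z) ∂μ :=
                keyt t _ hΘ₁ measurable_const measurable_const
                  (fun _ _ _ => rfl) (fun _ _ _ => rfl)
            _ = ∫⁻ z, C.indicator (fun _ => (1 : ℝ≥0∞)) z * (p z * q z) ∂μ := by
                refine lintegral_congr fun z => ?_
                rw [hPP1 t z, hQQ1 t z, mul_one, mul_one]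
        have hL2 : Pf ((fun x : Fin (T + 1) → α => x t) ⁻¹' C ∩ (U' ∩ V'))
            = ∫⁻ z, C.indicator (fun _ => (1 : ℝ≥0∞)) z * (p z * q z) ∂μ := by
          calc Pf ((fun x : Fin (T + 1) → α => x t) ⁻¹' C ∩ (U' ∩ V'))
              = ∫⁻ x, ((fun x : Fin (T + 1) → α => x t) ⁻¹' C ∩ (U' ∩ V')).indicator
                  (fun _ => (1 : ℝ≥0∞)) x ∂Pf := hPfset _ (hpre.inter (hU'.inter hV'))
            _ = ∫⁻ x, (fun z => C.indicator (fun _ => (1 : ℝ≥0∞)) z) (x t) * φ x * ψ x ∂Pf := by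
                refine lintegral_congr fun x => ?_
                by_cases hx1 : x t ∈ C <;> by_cases hx2 : x ∈ U' <;> by_cases hx3 : x ∈ V' <;>
                  simp [Set.indicator, Set.mem_preimage, hx1, hx2, hx3, hφdef, hψdef]
            _ = ∫⁻ z, (fun z => C.indicator (fun _ => (1 : ℝ≥0∞)) z) z
                  * (∫⋯∫⁻_(MLRAux.VP T (t : ℕ)),
                      (fun x => φ x * MLRAux.W ℓ (MLRAux.EP T (t : ℕ)) x) ∂(fun _ => μ))
                      (fun _ => z)
                  * (∫⋯∫⁻_(MLRAux.VF T (T - (t : ℕ))),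
                      (fun x => ψ x * MLRAux.W ℓ (MLRAux.EF T (T - (t : ℕ))) x) ∂(fun _ => μ))
                      (fun _ => z) ∂μ :=
                keyt t _ (measurable_const.indicator hC) hφm hψm Hφ Hψ
            _ = ∫⁻ z, C.indicator (fun _ => (1 : ℝ≥0∞)) z * (p z * q z) ∂μ := by
                refine lintegral_congr fun z => ?_
                exact mul_assoc _ _ _
        calc ∫ x in (fun x : Fin (T + 1) → α => x t) ⁻¹' C, g x ∂Pf
            = (∫⁻ x in (fun x : Fin (T + 1) → α => x t) ⁻¹' C, p (x t) * q (x t) ∂Pf).toReal := by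
              rw [← integral_toReal (hpq_meas.aemeasurable)
                (Filter.Eventually.of_forall fun x =>
                  lt_of_le_of_lt (hgbd x) ENNReal.one_lt_top)]
          _ = (Pf ((fun x : Fin (T + 1) → α => x t) ⁻¹' C ∩ (U' ∩ V'))).toReal := by
              rw [hL1, hL2]
          _ = ∫ x in (fun x : Fin (T + 1) → α => x t) ⁻¹' C,
                (U' ∩ V').indicator (fun _ => (1 : ℝ)) x ∂Pf := by
              rw [setIntegral_indicator (hU'.inter hV'), setIntegral_const, smul_eq_mul, mul_one, measureReal_def]
      have hgm' : AEStronglyMeasurable[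
          (MeasurableSpace.comap (fun x : Fin (T + 1) → α => x t) inferInstance)] g Pf := by
        have hxt : @Measurable _ _
            (MeasurableSpace.comap (fun x : Fin (T + 1) → α => x t) inferInstance) _
            (fun x : Fin (T + 1) → α => x t) := fun s hs => ⟨s, hs, rfl⟩
        have hgm'' : @Measurable _ _
            (MeasurableSpace.comap (fun x : Fin (T + 1) → α => x t) inferInstance) _ g :=
          (ENNReal.measurable_toReal.comp (hpm.mul hqm)).comp hxt
        exact hgm''.stronglyMeasurable.aestronglyMeasurable
      exact ae_eq_condExp_of_forall_setIntegral_eq ((measurable_pi_apply t).comap_le)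
        ((integrable_const (1 : ℝ)).indicator (hU'.inter hV'))
        (fun s _ _ => hg_integrable.integrableOn) hg_eq hgm'
    have hPPuniv : ∀ z : α,
        (∫⋯∫⁻_(MLRAux.VP T (t : ℕ)),
          (fun x => (Set.univ : Set (Fin (T + 1) → α)).indicator (fun _ => (1 : ℝ≥0∞)) x
            * MLRAux.W ℓ (MLRAux.EP T (t : ℕ)) x) ∂(fun _ => μ)) (fun _ => z) = 1 := by
      intro z
      simp only [Set.indicator_univ, one_mul]
      exact MLRAux.lmarginal_WP hℓmeas hcol (t : ℕ) (by have := t.isLt; omega) _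
    have hQQuniv : ∀ z : α,
        (∫⋯∫⁻_(MLRAux.VF T (T - (t : ℕ))),
          (fun x => (Set.univ : Set (Fin (T + 1) → α)).indicator (fun _ => (1 : ℝ≥0∞)) x
            * MLRAux.W ℓ (MLRAux.EF T (T - (t : ℕ))) x) ∂(fun _ => μ)) (fun _ => z) = 1 := by
      intro z
      simp only [Set.indicator_univ, one_mul]
      exact MLRAux.lmarginal_WF hℓmeas hrow (T - (t : ℕ)) (by omega) _
    have c_uv := cond_claim U V hU hV HU HV
    have c_u := cond_claim U Set.univ hU MeasurableSet.univ HU (fun _ _ _ => Iff.rfl)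
    have c_v := cond_claim Set.univ V MeasurableSet.univ hV (fun _ _ _ => Iff.rfl) HV
    rw [Set.inter_univ] at c_u
    rw [Set.univ_inter] at c_v
    filter_upwards [c_uv, c_u, c_v] with ω h1 h2 h3
    rw [← h1, ← h2, ← h3, hQQuniv (ω t), hPPuniv (ω t), mul_one, one_mul, ENNReal.toReal_mul]
  · -- expectation identity
    intro h hmeas _hbd
    rw [hPf]
    have hd : (fun x : Fin (T + 1) → α =>
        ENNReal.ofReal (∏ i : Fin T, L (x i.castSucc) (x i.succ)))
      = fun x => ((Real.toNNReal (∏ i : Fin T, L (x i.castSucc) (x i.succ)) : ℝ≥0) : ℝ≥0∞) :=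
      rfl
    have htm : Measurable fun x : Fin (T + 1) → α =>
        Real.toNNReal (∏ i : Fin T, L (x i.castSucc) (x i.succ)) := by
      exact measurable_real_toNNReal.comp hprodmeas
    rw [hd, integral_withDensity_eq_integral_smul htm h]
    refine integral_congr_ae (Filter.Eventually.of_forall fun x => ?_)
    have hnn : 0 ≤ ∏ i : Fin T, L (x i.castSucc) (x i.succ) :=
      Finset.prod_nonneg fun i _ => hLnonneg _ _
    simp only [NNReal.smul_def, Real.coe_toNNReal _ hnn, smul_eq_mul]
    exact mul_comm _ _
end

section
/- With X, Y, Z i.i.d. under P₀ and H̃ bounded, the function S(x,y,z) = H̃ − E₀[H̃|X,Y] − E₀[H̃|Y,Z] + E₀[H̃|Y] is the L²-orthogonal projection of H̃ onto the subspace {V(X,Y,Z) ∈ L²(P₀) : E₀[V|X,Y] = 0 and E₀[V|Y,Z] = 0 a.s.}; in particular E₀[S · (H̃ − S)] = 0. -/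
open MeasureTheory

section Aux

variable {α : Type*} [MeasurableSpace α]

lemma aux_integrable_of_bound (μ : Measure α) [IsFiniteMeasure μ] {f : α → ℝ}
    (hf : AEStronglyMeasurable f μ) (C : ℝ) (h : ∀ a, |f a| ≤ C) : Integrable f μ :=
  (integrable_const C).mono' hf (Filter.Eventually.of_forall fun a => by
    simpa [Real.norm_eq_abs] using h a)

end Aux

/-- With `X, Y, Z` i.i.d. with law `μ` and `H̃` bounded measurable, the
function `S = H̃ − E₀[H̃|X,Y] − E₀[H̃|Y,Z] + E₀[H̃|Y]` is the `L²`-orthogonal projection of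
`H̃` onto `{V ∈ L²(P₀) : E₀[V|X,Y] = 0 and E₀[V|Y,Z] = 0 a.s.}`: `S` belongs to the
subspace, `H̃ − S` is orthogonal to every member `V` of the subspace, and in particular
`E₀[S · (H̃ − S)] = 0`. -/
theorem two_lag_interaction_is_projection
    {α : Type*} [MeasurableSpace α]
    (μ : Measure α) [IsProbabilityMeasure μ]
    (H : α → α → α → ℝ)
    (hHmeas : Measurable fun p : α × α × α => H p.1 p.2.1 p.2.2)
    (C : ℝ) (hbdd : ∀ x y z, |H x y z| ≤ C)
    (S : α → α → α → ℝ)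
    (hS : ∀ x y z, S x y z =
      H x y z - (∫ z', H x y z' ∂μ) - (∫ x', H x' y z ∂μ) + ∫ x', ∫ z', H x' y z' ∂μ ∂μ) :
    -- `S` lies in the subspace
    ((∀ᵐ p ∂(μ.prod μ), ∫ z, S p.1 p.2 z ∂μ = 0)
      ∧ (∀ᵐ p ∂(μ.prod μ), ∫ x, S x p.1 p.2 ∂μ = 0))
    -- `H − S` is orthogonal to every member of the subspace
    ∧ (∀ V : α → α → α → ℝ,
        Measurable (fun p : α × α × α => V p.1 p.2.1 p.2.2) →
        MemLp (fun p : α × α × α => V p.1 p.2.1 p.2.2) 2 (μ.prod (μ.prod μ)) →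
        (∀ᵐ p ∂(μ.prod μ), ∫ z, V p.1 p.2 z ∂μ = 0) →
        (∀ᵐ p ∂(μ.prod μ), ∫ x, V x p.1 p.2 ∂μ = 0) →
        ∫ p : α × α × α,
          (H p.1 p.2.1 p.2.2 - S p.1 p.2.1 p.2.2) * V p.1 p.2.1 p.2.2
            ∂(μ.prod (μ.prod μ)) = 0)
    -- in particular `E₀[S (H̃ − S)] = 0`
    ∧ ∫ p : α × α × α,
        S p.1 p.2.1 p.2.2 * (H p.1 p.2.1 p.2.2 - S p.1 p.2.1 p.2.2)
          ∂(μ.prod (μ.prod μ)) = 0 := by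
  -- notations
  set g : α × α → ℝ := fun q => ∫ z, H q.1 q.2 z ∂μ with hg_def
  set h : α × α → ℝ := fun q => ∫ x, H x q.1 q.2 ∂μ with hh_def
  set k : α → ℝ := fun y => ∫ x, ∫ z, H x y z ∂μ ∂μ with hk_def
  -- measurability
  have hgm : Measurable g := by
    have : Measurable fun r : (α × α) × α => H r.1.1 r.1.2 r.2 :=
      hHmeas.comp ((measurable_fst.comp measurable_fst).prodMk
        ((measurable_snd.comp measurable_fst).prodMk measurable_snd))
    exact this.stronglyMeasurable.integral_prod_right'.measurable
  have hhm : Measurable h := hHmeas.stronglyMeasurable.integral_prod_left'.measurable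
  have hkm : Measurable k := hgm.stronglyMeasurable.integral_prod_left'.measurable
  -- sections of H are measurable
  have hsec_z : ∀ x y, Measurable fun z => H x y z := fun x y =>
    hHmeas.comp (measurable_const.prodMk (measurable_const.prodMk measurable_id))
  have hsec_x : ∀ y z, Measurable fun x => H x y z := by
    intro y z
    have hm : Measurable fun x : α => ((x, (y, z)) : α × α × α) :=
      measurable_id.prodMk measurable_const
    exact hHmeas.comp hm
  -- bounds
  have hgb : ∀ q, |g q| ≤ C := by
    intro q
    calc |g q| = ‖∫ z, H q.1 q.2 z ∂μ‖ := rfl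
    _ ≤ C * (μ Set.univ).toReal := norm_integral_le_of_norm_le_const
        (Filter.Eventually.of_forall fun z => by simpa [Real.norm_eq_abs] using hbdd q.1 q.2 z)
    _ = C := by simp
  have hhb : ∀ q, |h q| ≤ C := by
    intro q
    calc |h q| = ‖∫ x, H x q.1 q.2 ∂μ‖ := rfl
    _ ≤ C * (μ Set.univ).toReal := norm_integral_le_of_norm_le_const
        (Filter.Eventually.of_forall fun x => by simpa [Real.norm_eq_abs] using hbdd x q.1 q.2)
    _ = C := by simp
  have hkb : ∀ y, |k y| ≤ C := by
    intro y
    calc |k y| = ‖∫ x, g (x, y) ∂μ‖ := rfl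
    _ ≤ C * (μ Set.univ).toReal := norm_integral_le_of_norm_le_const
        (Filter.Eventually.of_forall fun x => by simpa [Real.norm_eq_abs] using hgb (x, y))
    _ = C := by simp
  -- key pointwise identity
  have hHS : ∀ x y z, H x y z - S x y z = g (x, y) + h (y, z) - k y := by
    intro x y z; rw [hS]; ring
  -- Part 1a : ∫ z, S x y z = 0 for all x y
  have part1a : ∀ x y, ∫ z, S x y z ∂μ = 0 := by
    intro x y
    have hiH : Integrable (fun z => H x y z) μ :=
      aux_integrable_of_bound μ (hsec_z x y).aestronglyMeasurable C (fun z => hbdd x y z)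
    have hih : Integrable (fun z => h (y, z)) μ :=
      aux_integrable_of_bound μ
        (hhm.comp (measurable_const.prodMk measurable_id)).aestronglyMeasurable C
        (fun z => hhb (y, z))
    have hswap : ∫ z, h (y, z) ∂μ = k y := by
      have hint : Integrable (Function.uncurry fun z x => H x y z) (μ.prod μ) := by
        refine aux_integrable_of_bound _ ?_ C ?_
        · exact (hHmeas.comp (measurable_snd.prodMk
            (measurable_const.prodMk measurable_fst))).aestronglyMeasurable
        · intro r; exact hbdd r.2 y r.1
      simpa [hh_def, hk_def] using integral_integral_swap hint
    have : ∀ z, S x y z = H x y z - g (x, y) - h (y, z) + k y := by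
      intro z; rw [hS]
    have i2 : Integrable (fun z => H x y z - g (x, y)) μ := hiH.sub (integrable_const _)
    have i3 : Integrable (fun z => H x y z - g (x, y) - h (y, z)) μ := i2.sub hih
    calc ∫ z, S x y z ∂μ
        = ∫ z, (H x y z - g (x, y) - h (y, z) + k y) ∂μ :=
          integral_congr_ae (Filter.Eventually.of_forall this)
      _ = g (x, y) - g (x, y) - k y + k y := by
          rw [integral_add i3 (integrable_const _), integral_sub i2 hih,
            integral_sub hiH (integrable_const _), hswap]
          simp [hg_def]
      _ = 0 := by ring
  -- Part 1b : ∫ x, S x y z = 0 for all y z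
  have part1b : ∀ y z, ∫ x, S x y z ∂μ = 0 := by
    intro y z
    have hiH : Integrable (fun x => H x y z) μ :=
      aux_integrable_of_bound μ (hsec_x y z).aestronglyMeasurable C (fun x => hbdd x y z)
    have hig : Integrable (fun x => g (x, y)) μ :=
      aux_integrable_of_bound μ
        (hgm.comp (measurable_id.prodMk measurable_const)).aestronglyMeasurable C
        (fun x => hgb (x, y))
    have : ∀ x, S x y z = H x y z - g (x, y) - h (y, z) + k y := by
      intro x; rw [hS]
    calc ∫ x, S x y z ∂μ
        = ∫ x, (H x y z - g (x, y) - h (y, z) + k y) ∂μ :=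
          integral_congr_ae (Filter.Eventually.of_forall this)
      _ = h (y, z) - k y - h (y, z) + k y := by
          have i2 : Integrable (fun x => H x y z - g (x, y)) μ := hiH.sub hig
          have i3 : Integrable (fun x => H x y z - g (x, y) - h (y, z)) μ :=
            i2.sub (integrable_const _)
          rw [integral_add i3 (integrable_const _), integral_sub i2 (integrable_const _),
            integral_sub hiH hig]
          simp [hh_def, hk_def, hg_def]
      _ = 0 := by ring
  -- Part 2 : orthogonality
  have part2 : ∀ V : α → α → α → ℝ,
      Measurable (fun p : α × α × α => V p.1 p.2.1 p.2.2) →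
      MemLp (fun p : α × α × α => V p.1 p.2.1 p.2.2) 2 (μ.prod (μ.prod μ)) →
      (∀ᵐ p ∂(μ.prod μ), ∫ z, V p.1 p.2 z ∂μ = 0) →
      (∀ᵐ p ∂(μ.prod μ), ∫ x, V x p.1 p.2 ∂μ = 0) →
      ∫ p : α × α × α,
        (H p.1 p.2.1 p.2.2 - S p.1 p.2.1 p.2.2) * V p.1 p.2.1 p.2.2
          ∂(μ.prod (μ.prod μ)) = 0 := by
    intro V hVm hV2 hVz hVx
    have hVi : Integrable (fun p : α × α × α => V p.1 p.2.1 p.2.2) (μ.prod (μ.prod μ)) :=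
      hV2.integrable one_le_two
    -- integrability of the three product pieces
    have higV : Integrable (fun p : α × α × α => g (p.1, p.2.1) * V p.1 p.2.1 p.2.2)
        (μ.prod (μ.prod μ)) :=
      hVi.bdd_mul ((hgm.comp (measurable_fst.prodMk
        (measurable_fst.comp measurable_snd))).aestronglyMeasurable)
        (c := C) (Filter.Eventually.of_forall fun p => by simpa [Real.norm_eq_abs] using hgb (p.1, p.2.1))
    have hihV : Integrable (fun p : α × α × α => h p.2 * V p.1 p.2.1 p.2.2)
        (μ.prod (μ.prod μ)) :=
      hVi.bdd_mul ((hhm.comp measurable_snd).aestronglyMeasurable)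
        (c := C) (Filter.Eventually.of_forall fun p => by simpa [Real.norm_eq_abs] using hhb p.2)
    have hikV : Integrable (fun p : α × α × α => k p.2.1 * V p.1 p.2.1 p.2.2)
        (μ.prod (μ.prod μ)) :=
      hVi.bdd_mul ((hkm.comp (measurable_fst.comp measurable_snd)).aestronglyMeasurable)
        (c := C) (Filter.Eventually.of_forall fun p => by simpa [Real.norm_eq_abs] using hkb p.2.1)
    -- transport to ((α × α) × α) via prodAssoc for the g and k pieces
    have hassoc := measurePreserving_prodAssoc μ μ μ
    have key_assoc : ∀ f : α × α × α → ℝ, Integrable f (μ.prod (μ.prod μ)) →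
        ∫ p, f p ∂(μ.prod (μ.prod μ)) =
          ∫ q, ∫ z, f (q.1, q.2, z) ∂μ ∂(μ.prod μ) := by
      intro f hf
      have h1 : ∫ p, f p ∂(μ.prod (μ.prod μ)) =
          ∫ r, f (MeasurableEquiv.prodAssoc r) ∂((μ.prod μ).prod μ) := by
        rw [← hassoc.map_eq, integral_map_equiv]
      rw [h1]
      have hfi : Integrable (fun r : (α × α) × α => f (MeasurableEquiv.prodAssoc r))
          ((μ.prod μ).prod μ) := by
        rw [← hassoc.map_eq] at hf
        exact (integrable_map_equiv MeasurableEquiv.prodAssoc f).mp hf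
      rw [integral_prod _ hfi]
      rfl
    -- I1 : g piece vanishes
    have I1 : ∫ p : α × α × α, g (p.1, p.2.1) * V p.1 p.2.1 p.2.2 ∂(μ.prod (μ.prod μ)) = 0 := by
      rw [key_assoc _ higV]
      have : ∀ᵐ q ∂(μ.prod μ), ∫ z, g (q.1, q.2) * V q.1 q.2 z ∂μ = 0 := by
        filter_upwards [hVz] with q hq
        rw [integral_const_mul, hq, mul_zero]
      calc ∫ q, ∫ z, g (q.1, q.2) * V q.1 q.2 z ∂μ ∂(μ.prod μ)
          = ∫ _ : α × α, (0 : ℝ) ∂(μ.prod μ) := integral_congr_ae this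
        _ = 0 := integral_zero _ _
    -- I3 : k piece vanishes
    have I3 : ∫ p : α × α × α, k p.2.1 * V p.1 p.2.1 p.2.2 ∂(μ.prod (μ.prod μ)) = 0 := by
      rw [key_assoc _ hikV]
      have : ∀ᵐ q ∂(μ.prod μ), ∫ z, k q.2 * V q.1 q.2 z ∂μ = 0 := by
        filter_upwards [hVz] with q hq
        rw [integral_const_mul, hq, mul_zero]
      calc ∫ q, ∫ z, k q.2 * V q.1 q.2 z ∂μ ∂(μ.prod μ)
          = ∫ _ : α × α, (0 : ℝ) ∂(μ.prod μ) := integral_congr_ae this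
        _ = 0 := integral_zero _ _
    -- I2 : h piece vanishes
    have I2 : ∫ p : α × α × α, h p.2 * V p.1 p.2.1 p.2.2 ∂(μ.prod (μ.prod μ)) = 0 := by
      have hswap : ∫ p : α × α × α, h p.2 * V p.1 p.2.1 p.2.2 ∂(μ.prod (μ.prod μ)) =
          ∫ q : α × α, ∫ x, h q * V x q.1 q.2 ∂μ ∂(μ.prod μ) := by
        rw [integral_prod _ hihV]
        exact integral_integral_swap hihV
      rw [hswap]
      have : ∀ᵐ q ∂(μ.prod μ), ∫ x, h q * V x q.1 q.2 ∂μ = 0 := by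
        filter_upwards [hVx] with q hq
        rw [integral_const_mul, hq, mul_zero]
      calc ∫ q, ∫ x, h q * V x q.1 q.2 ∂μ ∂(μ.prod μ)
          = ∫ _ : α × α, (0 : ℝ) ∂(μ.prod μ) := integral_congr_ae this
        _ = 0 := integral_zero _ _
    -- combine
    calc ∫ p : α × α × α,
          (H p.1 p.2.1 p.2.2 - S p.1 p.2.1 p.2.2) * V p.1 p.2.1 p.2.2 ∂(μ.prod (μ.prod μ))
        = ∫ p : α × α × α,
            (g (p.1, p.2.1) * V p.1 p.2.1 p.2.2 + h p.2 * V p.1 p.2.1 p.2.2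
              - k p.2.1 * V p.1 p.2.1 p.2.2) ∂(μ.prod (μ.prod μ)) := by
          refine integral_congr_ae (Filter.Eventually.of_forall fun p => ?_)
          have := hHS p.1 p.2.1 p.2.2
          dsimp only
          rw [this]; ring
      _ = (∫ p : α × α × α, g (p.1, p.2.1) * V p.1 p.2.1 p.2.2 ∂(μ.prod (μ.prod μ)))
            + (∫ p : α × α × α, h p.2 * V p.1 p.2.1 p.2.2 ∂(μ.prod (μ.prod μ)))
            - ∫ p : α × α × α, k p.2.1 * V p.1 p.2.1 p.2.2 ∂(μ.prod (μ.prod μ)) := by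
          have iGH : Integrable (fun p : α × α × α =>
              g (p.1, p.2.1) * V p.1 p.2.1 p.2.2 + h p.2 * V p.1 p.2.1 p.2.2)
              (μ.prod (μ.prod μ)) := higV.add hihV
          rw [integral_sub iGH hikV, integral_add higV hihV]
      _ = 0 := by rw [I1, I2, I3]; ring
  refine ⟨⟨Filter.Eventually.of_forall fun p => part1a p.1 p.2,
      Filter.Eventually.of_forall fun p => part1b p.1 p.2⟩, part2, ?_⟩
  -- Part 3 : apply part 2 to V = S
  have hSm : Measurable (fun p : α × α × α => S p.1 p.2.1 p.2.2) := by
    have : (fun p : α × α × α => S p.1 p.2.1 p.2.2) =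
        fun p : α × α × α => H p.1 p.2.1 p.2.2 - g (p.1, p.2.1) - h p.2 + k p.2.1 := by
      funext p; rw [hS]
    rw [this]
    exact ((hHmeas.sub (hgm.comp (measurable_fst.prodMk
      (measurable_fst.comp measurable_snd)))).sub (hhm.comp measurable_snd)).add
      (hkm.comp (measurable_fst.comp measurable_snd))
  have hSb : ∀ p : α × α × α, |S p.1 p.2.1 p.2.2| ≤ 4 * C := by
    intro p
    rw [hS]
    calc |H p.1 p.2.1 p.2.2 - g (p.1, p.2.1) - h (p.2.1, p.2.2) + k p.2.1|
        ≤ |H p.1 p.2.1 p.2.2 - g (p.1, p.2.1) - h (p.2.1, p.2.2)| + |k p.2.1| := abs_add_le _ _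
      _ ≤ (|H p.1 p.2.1 p.2.2 - g (p.1, p.2.1)| + |h (p.2.1, p.2.2)|) + |k p.2.1| := by
          exact add_le_add_left (abs_sub _ _) _
      _ ≤ ((|H p.1 p.2.1 p.2.2| + |g (p.1, p.2.1)|) + |h (p.2.1, p.2.2)|) + |k p.2.1| := by
          exact add_le_add_left (add_le_add_left (abs_sub _ _) _) _
      _ ≤ ((C + C) + C) + C :=
          add_le_add (add_le_add (add_le_add (hbdd _ _ _) (hgb _)) (hhb _)) (hkb _)
      _ = 4 * C := by ring
  have hS2 : MemLp (fun p : α × α × α => S p.1 p.2.1 p.2.2) 2 (μ.prod (μ.prod μ)) :=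
    MemLp.of_bound hSm.aestronglyMeasurable (4 * C)
      (Filter.Eventually.of_forall fun p => by simpa [Real.norm_eq_abs] using hSb p)
  have := part2 S hSm hS2
    (Filter.Eventually.of_forall fun p => part1a p.1 p.2)
    (Filter.Eventually.of_forall fun p => part1b p.1 p.2)
  calc ∫ p : α × α × α,
        S p.1 p.2.1 p.2.2 * (H p.1 p.2.1 p.2.2 - S p.1 p.2.1 p.2.2) ∂(μ.prod (μ.prod μ))
      = ∫ p : α × α × α,
        (H p.1 p.2.1 p.2.2 - S p.1 p.2.1 p.2.2) * S p.1 p.2.1 p.2.2 ∂(μ.prod (μ.prod μ)) := by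
        refine integral_congr_ae (Filter.Eventually.of_forall fun p => ?_); ring
    _ = 0 := this
end
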